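/- arXiv:1805.09394 — 11 statements merged into one kernel-verified Lean document; each statement's English description precedes it below -/
import Mathlib

section
/- For every even n and every integer s with 0 < s < n/2, the chromatic number of the generalized Johnson graph J(n, n/2, s) is at most 2·C(2s+1, s+1), where C denotes the binomial coefficient. -/
/-!
Fix a set `T` of `2s + 1` points. Every vertex `v` contains at least `s + 1` points of `T` or
misses at least `s + 1` of them, so it can be coloured by a flag recording which, together with a
witnessing `(s + 1)`-subset of `T`. Two adjacent vertices with the same colour would then share
`s + 1` points, or jointly miss `s + 1` points; but they meet in exactly `s` points, and when
`n ≤ 2k` their union misses `n - 2k + s ≤ s` points.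
-/

/-- The generalized Johnson graph `J(n,k,s)`: vertices are the `k`-element
subsets of `{1,…,n}`, two vertices adjacent iff their intersection has size exactly `s`. -/
def johnsonGraph (n k s : ℕ) : SimpleGraph {v : Finset (Fin n) // v.card = k} where
  Adj v w := v ≠ w ∧ ((v : Finset (Fin n)) ∩ (w : Finset (Fin n))).card = s
  symm := ⟨fun v w ⟨hne, h⟩ => ⟨hne.symm, by rwa [Finset.inter_comm]⟩⟩
  loopless := ⟨fun v h => h.1 rfl⟩

open Finset

namespace Finset

variable {α : Type*} [DecidableEq α]

lemma exists_mem_powersetCard_subset_or_disjoint {s : ℕ} {T : Finset α} (hT : #T = 2 * s + 1)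
    (v : Finset α) : ∃ X ∈ T.powersetCard (s + 1), X ⊆ v ∨ Disjoint X v := by
  have hsplit := card_inter_add_card_sdiff T v
  by_cases hin : s + 1 ≤ #(T ∩ v)
  · obtain ⟨X, hXsub, hXcard⟩ := exists_subset_card_eq hin
    exact ⟨X, mem_powersetCard.2 ⟨hXsub.trans inter_subset_left, hXcard⟩,
      .inl (hXsub.trans inter_subset_right)⟩
  · obtain ⟨X, hXsub, hXcard⟩ := exists_subset_card_eq (show s + 1 ≤ #(T \ v) by omega)
    exact ⟨X, mem_powersetCard.2 ⟨hXsub.trans sdiff_subset, hXcard⟩,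
      .inr (disjoint_of_subset_left hXsub sdiff_disjoint)⟩

end Finset

namespace SimpleGraph

theorem colorable_of_card_inter_le_of_card_compl_union_le {V α : Type*} [Fintype α]
    [DecidableEq α] (G : SimpleGraph V) (f : V → Finset α) {s : ℕ}
    (hα : 2 * s + 1 ≤ Fintype.card α)
    (hinter : ∀ v w, G.Adj v w → #(f v ∩ f w) ≤ s)
    (hunion : ∀ v w, G.Adj v w → #(f v ∪ f w)ᶜ ≤ s) :
    G.Colorable (2 * (2 * s + 1).choose (s + 1)) := by
  obtain ⟨T, -, hT⟩ :=
    exists_subset_card_eq (show 2 * s + 1 ≤ #(univ : Finset α) by rwa [card_univ])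
  have hcolour : ∀ v, ∃ c : Bool × T.powersetCard (s + 1),
      bif c.1 then c.2.1 ⊆ f v else Disjoint c.2.1 (f v) := by
    intro v
    obtain ⟨X, hX, hsub | hdisj⟩ := exists_mem_powersetCard_subset_or_disjoint hT (f v)
    exacts [⟨(true, ⟨X, hX⟩), hsub⟩, ⟨(false, ⟨X, hX⟩), hdisj⟩]
  choose c hc using hcolour
  have hcard :
      Fintype.card (Bool × T.powersetCard (s + 1)) = 2 * (2 * s + 1).choose (s + 1) := by
    rw [Fintype.card_prod, Fintype.card_bool, Fintype.card_coe, card_powersetCard, hT]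
  refine hcard ▸ (Coloring.mk c fun {v w} hadj hvw => ?_).colorable
  rcases hcv : c v with ⟨b, X, hX⟩
  have hv := hc v
  have hw := hc w
  rw [hcv] at hv
  rw [← hvw, hcv] at hw
  have hXcard := (mem_powersetCard.1 hX).2
  cases b
  · have hsub : X ⊆ (f v ∪ f w)ᶜ :=
      subset_compl_iff_disjoint_right.2 (disjoint_union_right.2 ⟨hv, hw⟩)
    have := card_le_card hsub
    have := hunion v w hadj
    omega
  · have hsub : X ⊆ f v ∩ f w := subset_inter hv hw
    have := card_le_card hsub
    have := hinter v w hadj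
    omega

theorem johnsonGraph_colorable {n k s : ℕ} (hnk : n ≤ 2 * k) (hsn : 2 * s + 1 ≤ n) :
    (johnsonGraph n k s).Colorable (2 * (2 * s + 1).choose (s + 1)) := by
  refine colorable_of_card_inter_le_of_card_compl_union_le _ Subtype.val (by simpa using hsn)
    (fun v w hadj => hadj.2.le) fun v w hadj => ?_
  have := card_union_add_card_inter v.1 w.1
  rw [card_compl, Fintype.card_fin]
  have := v.2
  have := w.2
  have := hadj.2
  omega

end SimpleGraph

theorem johnson_chromatic_upper_general (n s : ℕ) (hn : Even n) (hsn : s < n / 2) :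
    (johnsonGraph n (n / 2) s).chromaticNumber ≤ ((2 * Nat.choose (2 * s + 1) (s + 1) : ℕ) : ℕ∞) :=
  (SimpleGraph.johnsonGraph_colorable (Nat.two_mul_div_two_of_even hn).ge
    (by omega)).chromaticNumber_le

/-- For every even `n` and every `0 < s < n/2`, the chromatic number of
`J(n, n/2, s)` is at most `2 * C(2s+1, s+1)`. -/
theorem johnson_chromatic_upper (n s : ℕ) (hn : Even n) (hs : 0 < s) (hsn : s < n / 2) :
    (johnsonGraph n (n / 2) s).chromaticNumber ≤ ((2 * Nat.choose (2 * s + 1) (s + 1) : ℕ) : ℕ∞) :=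
  johnson_chromatic_upper_general n s hn hsn
end

section
/- Let n be even, t ≤ n/2, s ≥ 1, and let A_0, A_1, …, A_q be subsets of {1,…,n}, each of size at least s, such that the Frankl sets I_{A_0}, …, I_{A_q} cover all (n/2 − t)-element subsets of {1,…,n} (i.e., they form a proper F-coloring of K(n, n/2 − t, s)). Then the hypergraph H with vertex set V = A_0 ∪ ⋯ ∪ A_q and edge set E = {A_0, …, A_q} has discrepancy at least s: for every 2-coloring c : {1,…,n} → {±1} there exists an index i with |Σ_{x ∈ A_i} c(x)| ≥ s. -/
/-!
Colour the points with `c = ±1`. One colour class has at least `n / 2 ≥ n / 2 - t` points, so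
it contains an `(n / 2 - t)`-set `v`, and `v` lies in some Frankl set `I_{A_i}`. On `A_i` the
majority colour then wins by at least `2 |v ∩ A_i| - |A_i| ≥ s`.
-/

open Finset

variable {α : Type*}

lemma two_mul_card_inter_sub_card_le_sum [DecidableEq α] {c : α → ℤ} {v A : Finset α}
    (hv : ∀ x ∈ v, c x = 1) (hA : ∀ x ∈ A, -1 ≤ c x) :
    2 * (#(v ∩ A) : ℤ) - #A ≤ ∑ x ∈ A, c x := by
  have h_inter : ∑ x ∈ A ∩ v, c x = #(A ∩ v) := by
    rw [sum_congr rfl fun x hx => hv x (mem_inter.1 hx).2]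
    simp
  have h_diff : -(#(A \ v) : ℤ) ≤ ∑ x ∈ A \ v, c x := by
    simpa using card_nsmul_le_sum (A \ v) c (-1) fun x hx => hA x (mem_sdiff.1 hx).1
  have h_card : (#(A ∩ v) : ℤ) + #(A \ v) = #A := mod_cast card_inter_add_card_sdiff A v
  rw [← sum_inter_add_sum_sdiff A v c, inter_comm v A]
  linarith

lemma exists_sign_card_le_two_mul_card_filter [Fintype α] {c : α → ℤ}
    (hc : ∀ x, c x = 1 ∨ c x = -1) :
    ∃ ε : ℤ, |ε| = 1 ∧ Fintype.card α ≤ 2 * #{x | ε * c x = 1} := by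
  classical
  have h_split := card_filter_add_card_filter_not (s := univ) fun x => c x = 1
  have h_neg : #{x | ¬c x = 1} = #{x | -1 * c x = 1} := by
    congr 1
    ext x
    rcases hc x with h | h <;> simp [h]
  rw [card_univ, h_neg] at h_split
  by_cases h : #{x | 1 * c x = 1} ≤ #{x | -1 * c x = 1}
  · exact ⟨-1, by simp, by simp only [one_mul] at h; omega⟩
  · exact ⟨1, by simp, by simp only [one_mul] at h ⊢; omega⟩

theorem franklCover_discrepancy_general (n t s q : ℕ)
    (A : Fin (q + 1) → Finset (Fin n))
    (hcover : ∀ v : Finset (Fin n), v.card = n / 2 - t →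
      ∃ i, (A i).card + s ≤ 2 * (v ∩ A i).card) :
    ∀ c : Fin n → ℤ, (∀ x, c x = 1 ∨ c x = -1) →
      ∃ i, (s : ℤ) ≤ |∑ x ∈ A i, c x| := by
  intro c hc
  obtain ⟨ε, hε, h_major⟩ := exists_sign_card_le_two_mul_card_filter hc
  rw [Fintype.card_fin] at h_major
  obtain ⟨v, hv, hv_card⟩ := exists_subset_card_eq (s := {x | ε * c x = 1}) (n := n / 2 - t)
    (by omega)
  obtain ⟨i, hi⟩ := hcover v hv_card
  have h_abs : ∀ x, |c x| = 1 := fun x => by rcases hc x with h | h <;> simp [h]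
  have h_bound : ∀ x ∈ A i, -1 ≤ ε * c x := fun x _ =>
    (abs_le.1 (by rw [abs_mul, hε, h_abs, one_mul])).1
  refine ⟨i, ?_⟩
  calc (s : ℤ) ≤ 2 * #(v ∩ A i) - #(A i) := by omega
    _ ≤ ∑ x ∈ A i, ε * c x :=
      two_mul_card_inter_sub_card_le_sum (fun x hx => (mem_filter.1 (hv hx)).2) h_bound
    _ = ε * ∑ x ∈ A i, c x := (mul_sum _ _ _).symm
    _ ≤ |∑ x ∈ A i, c x| := by simpa [abs_mul, hε] using le_abs_self (ε * ∑ x ∈ A i, c x)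

/-- If the Frankl sets `I_{A_0}, …, I_{A_q}` form a proper F-coloring of `K(n, n/2 - t, s)`
(i.e. they cover all `(n/2 - t)`-element subsets of `{1,…,n}`), then the hypergraph with
edges `A_0, …, A_q` has discrepancy at least `s`: every `±1`-coloring `c` of `{1,…,n}`
admits an index `i` with `|Σ_{x ∈ A_i} c(x)| ≥ s`. -/
theorem franklCover_discrepancy (n t s q : ℕ) (hn : Even n) (ht : t ≤ n / 2) (hs : 1 ≤ s)
    (A : Fin (q + 1) → Finset (Fin n)) (hA : ∀ i, s ≤ (A i).card)
    (hcover : ∀ v : Finset (Fin n), v.card = n / 2 - t →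
      ∃ i, (A i).card + s ≤ 2 * (v ∩ A i).card) :
    ∀ c : Fin n → ℤ, (∀ x, c x = 1 ∨ c x = -1) →
      ∃ i, (s : ℤ) ≤ |∑ x ∈ A i, c x| :=
  franklCover_discrepancy_general n t s q A hcover
end

section
/- Let K > 0 be a constant such that every finite hypergraph (V,E) with |V| < |E| has discrepancy at most K·√(|V|·ln(|E|/|V|)). Then for every even n and every s ≥ 1, any proper F-coloring of the generalized Kneser graph K(n, n/2, s) using q > n Frankl sets satisfies q ≥ n·exp(s²/(K²·n)). -/
/-!
Colour the ground set by a low-discrepancy colouring `c` of the hypergraph of Frankl sets.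
One colour class has at least `n/2` points; a set `v` of exactly `n/2` of them is covered by
some Frankl set `A`, and then `∑_{x ∈ A} c x ≥ 2|v ∩ A| - |A| ≥ s`.  So
`s ≤ K √(n ln(q/n))`, which rearranges to `q ≥ n exp(s²/(K² n))`.
-/

open Finset

section Signs

variable {α : Type*}

theorem sum_sign_eq {c : α → ℤ} (hc : ∀ x, c x = 1 ∨ c x = -1) (e : Finset α) :
    ∑ x ∈ e, c x = 2 * #{x ∈ e | c x = 1} - #e := by
  have hc' : ∀ x, c x = 2 * (if c x = 1 then 1 else 0) - 1 := fun x => by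
    rcases hc x with h | h <;> simp [h]
  rw [sum_congr rfl fun x _ => hc' x, sum_sub_distrib, ← mul_sum, sum_boole]
  simp

variable [DecidableEq α]

theorem le_sum_of_forall_mem_eq_one {c : α → ℤ} (hc : ∀ x, c x = 1 ∨ c x = -1)
    {v A : Finset α} {s : ℕ} (hv : ∀ x ∈ v, c x = 1) (hA : #A + s ≤ 2 * #(v ∩ A)) :
    (s : ℤ) ≤ ∑ x ∈ A, c x := by
  have hvA : #(v ∩ A) ≤ #{x ∈ A | c x = 1} :=
    card_le_card fun x hx => by
      rw [mem_inter] at hx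
      exact mem_filter.mpr ⟨hx.2, hv x hx.1⟩
  rw [sum_sign_eq hc]
  omega

variable [Fintype α]

theorem exists_le_abs_sum_of_cover {𝒜 : Finset (Finset α)} {s : ℕ}
    (hcover : ∀ v : Finset α, #v = Fintype.card α / 2 → ∃ A ∈ 𝒜, #A + s ≤ 2 * #(v ∩ A))
    (c : α → ℤ) (hc : ∀ x, c x = 1 ∨ c x = -1) :
    ∃ A ∈ 𝒜, (s : ℤ) ≤ |∑ x ∈ A, c x| := by
  wlog hmaj : Fintype.card α / 2 ≤ #{x | c x = 1} generalizing c
  · have hneg : ∀ x, -c x = 1 ∨ -c x = -1 := fun x => by rcases hc x with h | h <;> simp [h]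
    have hsplit : #{x | c x = 1} + #{x | -c x = 1} = Fintype.card α := by
      rw [← card_univ, ← card_filter_add_card_filter_not (s := univ) (p := fun x => c x = 1)]
      congr 2
      exact filter_congr fun x _ => by rcases hc x with h | h <;> simp [h]
    obtain ⟨A, hA, hsA⟩ := this (-c) hneg (by simp only [Pi.neg_apply]; omega)
    exact ⟨A, hA, by simpa only [Pi.neg_apply, sum_neg_distrib, abs_neg] using hsA⟩
  obtain ⟨v, hvP, hv⟩ := exists_subset_card_eq hmaj
  obtain ⟨A, hA, hvA⟩ := hcover v hv
  refine ⟨A, hA, (le_sum_of_forall_mem_eq_one hc (fun x hx => ?_) hvA).trans (le_abs_self _)⟩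
  exact (mem_filter.mp (hvP hx)).2

end Signs

theorem mul_exp_le_of_le_mul_sqrt_log {K s n q : ℝ} (hs : 0 ≤ s) (hn : 0 ≤ n) (hnq : n ≤ q)
    (h : s ≤ K * √(n * Real.log (q / n))) :
    n * Real.exp (s ^ 2 / (K ^ 2 * n)) ≤ q := by
  rcases hn.eq_or_lt with rfl | hn
  · simpa using hnq
  have hlog : 0 ≤ Real.log (q / n) := Real.log_nonneg ((one_le_div hn).mpr hnq)
  have hsq : s ^ 2 ≤ Real.log (q / n) * (K ^ 2 * n) := by
    calc s ^ 2 ≤ (K * √(n * Real.log (q / n))) ^ 2 := pow_le_pow_left₀ hs h 2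
      _ = Real.log (q / n) * (K ^ 2 * n) := by
        rw [mul_pow, Real.sq_sqrt (by positivity)]; ring
  have hexp : Real.exp (s ^ 2 / (K ^ 2 * n)) ≤ q / n :=
    (Real.le_log_iff_exp_le (div_pos (hn.trans_le hnq) hn)).mp (div_le_of_le_mul₀ (by positivity) hlog hsq)
  rwa [← le_div_iff₀' hn]

theorem fChromatic_lower_log_general (K : ℝ)
    (hdisc : ∀ (N : ℕ) (E : Finset (Finset (Fin N))), N < E.card →
      ∃ c : Fin N → ℤ, (∀ x, c x = 1 ∨ c x = -1) ∧
        ∀ e ∈ E, |((∑ x ∈ e, c x : ℤ) : ℝ)| ≤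
          K * Real.sqrt ((N : ℝ) * Real.log ((E.card : ℝ) / (N : ℝ))))
    (n s : ℕ)
    (𝒜 : Finset (Finset (Fin n))) (hq : n < 𝒜.card)
    (hcover : ∀ v : Finset (Fin n), v.card = n / 2 →
      ∃ A ∈ 𝒜, A.card + s ≤ 2 * (v ∩ A).card) :
    (n : ℝ) * Real.exp ((s : ℝ) ^ 2 / (K ^ 2 * (n : ℝ))) ≤ (𝒜.card : ℝ) := by
  obtain ⟨c, hc, hdisc𝒜⟩ := hdisc n 𝒜 hq
  obtain ⟨A, hA, hsA⟩ :=
    exists_le_abs_sum_of_cover (by simpa only [Fintype.card_fin] using hcover) c hc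
  have hs : (s : ℝ) ≤ K * √(n * Real.log (𝒜.card / n)) :=
    le_trans (by exact_mod_cast hsA) (hdisc𝒜 A hA)
  exact mul_exp_le_of_le_mul_sqrt_log s.cast_nonneg n.cast_nonneg (by exact_mod_cast hq.le) hs

/-- Suppose `K > 0` is a constant such that every finite hypergraph `(V, E)` with `|V| < |E|`
has discrepancy at most `K·√(|V|·ln(|E|/|V|))`.  Then for every even `n` and `s ≥ 1`, any
proper F-coloring of the generalized Kneser graph `K(n, n/2, s)` using `q > n` Frankl sets
satisfies `q ≥ n·exp(s²/(K²·n))`. -/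
theorem fChromatic_lower_log (K : ℝ) (hK : 0 < K)
    (hdisc : ∀ (N : ℕ) (E : Finset (Finset (Fin N))), N < E.card →
      ∃ c : Fin N → ℤ, (∀ x, c x = 1 ∨ c x = -1) ∧
        ∀ e ∈ E, |((∑ x ∈ e, c x : ℤ) : ℝ)| ≤
          K * Real.sqrt ((N : ℝ) * Real.log ((E.card : ℝ) / (N : ℝ))))
    (n s : ℕ) (hn : Even n) (hs : 1 ≤ s)
    (𝒜 : Finset (Finset (Fin n))) (hq : n < 𝒜.card)
    (h𝒜 : ∀ A ∈ 𝒜, s ≤ A.card)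
    (hcover : ∀ v : Finset (Fin n), v.card = n / 2 →
      ∃ A ∈ 𝒜, A.card + s ≤ 2 * (v ∩ A).card) :
    (n : ℝ) * Real.exp ((s : ℝ) ^ 2 / (K ^ 2 * (n : ℝ))) ≤ (𝒜.card : ℝ) :=
  fChromatic_lower_log_general K hdisc n s 𝒜 hq hcover
end

section
/- Let n be even, t ≤ n/2, s ≥ 1, and let H = (V, E) be a finite hypergraph with |V| ≤ n whose t-shifted discrepancy is at least s + t; that is, for every 2-coloring of V there is an edge e ∈ E with |blue(e) − red(e) + t| ≥ s + t, where blue(e) and red(e) denote the numbers of blue and red vertices of e. Then the F-chromatic number of the generalized Kneser graph K(n, n/2 − t, s) is at most 2·|E|. -/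
/-- Let `n` be even, `t ≤ n/2`, `s ≥ 1`, and let `H = (V, E)` be a finite hypergraph with
`|V| ≤ n` (realized as `V ⊆ {1,…,n}`) whose `t`-shifted discrepancy is at least `s + t`:
for every 2-coloring of `V` (given by its blue set `B ⊆ V`) there is an edge `e ∈ E` with
`|blue(e) − red(e) + t| ≥ s + t`.  Then the F-chromatic number of the generalized Kneser
graph `K(n, n/2 − t, s)` is at most `2·|E|`: there are `2·|E|` Frankl sets covering all
`(n/2 − t)`-element subsets of `{1,…,n}`. -/
theorem fChromatic_of_shifted_discrepancy (n t s : ℕ) (hn : Even n) (ht : t ≤ n / 2)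
    (hs : 1 ≤ s) (V : Finset (Fin n)) (E : Finset (Finset (Fin n)))
    (hEV : ∀ e ∈ E, e ⊆ V)
    (hdisc : ∀ B : Finset (Fin n), B ⊆ V → ∃ e ∈ E,
      ((s : ℤ) + (t : ℤ)) ≤ |((e ∩ B).card : ℤ) - ((e \ B).card : ℤ) + (t : ℤ)|) :
    ∃ A : Fin (2 * E.card) → Finset (Fin n), (∀ i, s ≤ (A i).card) ∧
      ∀ v : Finset (Fin n), v.card = n / 2 - t →
        ∃ i, (A i).card + s ≤ 2 * (v ∩ A i).card := by
  classical
  obtain ⟨e₀, he₀E, he₀d⟩ := hdisc ∅ (Finset.empty_subset V)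
  simp only [Finset.inter_empty, Finset.sdiff_empty, Finset.card_empty] at he₀d
  have he₀s : s ≤ e₀.card := by
    rcases abs_cases (((0:ℕ):ℤ) - (e₀.card:ℤ) + t) with ⟨h, _⟩ | ⟨h, _⟩ <;>
      rw [h] at he₀d <;> omega
  have hm : 0 < E.card := Finset.card_pos.mpr ⟨e₀, he₀E⟩
  set m := E.card with hmdef
  let eqv := E.equivFin
  let F : Fin m → Finset (Fin n) := fun j => (eqv.symm j : Finset (Fin n))
  refine ⟨fun i => if h : i.val < m then
      (if s ≤ (F ⟨i.val, h⟩).card then F ⟨i.val, h⟩ else e₀)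
    else
      (if s ≤ (F ⟨i.val - m, by have := i.isLt; omega⟩)ᶜ.card
        then (F ⟨i.val - m, by have := i.isLt; omega⟩)ᶜ else e₀),
    ?_, ?_⟩
  · intro i
    dsimp only
    split_ifs <;> assumption
  · intro v hv
    obtain ⟨e, heE, hineq⟩ := hdisc (v ∩ V) Finset.inter_subset_right
    have hB1 : e ∩ (v ∩ V) = e ∩ v := by
      ext x; simp only [Finset.mem_inter]
      exact ⟨fun ⟨h1, h2, _⟩ => ⟨h1, h2⟩, fun ⟨h1, h2⟩ => ⟨h1, h2, hEV e heE h1⟩⟩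
    have hB2 : e \ (v ∩ V) = e \ v := by
      ext x; simp only [Finset.mem_sdiff, Finset.mem_inter]
      constructor
      · rintro ⟨h1, h2⟩; exact ⟨h1, fun hv' => h2 ⟨hv', hEV e heE h1⟩⟩
      · rintro ⟨h1, h2⟩; exact ⟨h1, fun h' => h2 h'.1⟩
    rw [hB1, hB2] at hineq
    have h1 : (e ∩ v).card + (e \ v).card = e.card := Finset.card_inter_add_card_sdiff e v
    have h2 : (v ∩ e).card = (e ∩ v).card := by rw [Finset.inter_comm]
    have hFj : F (eqv ⟨e, heE⟩) = e := by simp [F, eqv]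
    have hlt : (eqv ⟨e, heE⟩).val < m := (eqv ⟨e, heE⟩).isLt
    rcases abs_cases (((e ∩ v).card : ℤ) - ((e \ v).card : ℤ) + t) with ⟨habs, _⟩ | ⟨habs, _⟩ <;>
      rw [habs] at hineq
    · -- case 1: Frankl set e
      have hcase : (e \ v).card + s ≤ (e ∩ v).card := by omega
      have hes : s ≤ e.card := by omega
      refine ⟨⟨(eqv ⟨e, heE⟩).val, by omega⟩, ?_⟩
      dsimp only
      rw [dif_pos hlt]
      have hFe : F ⟨(eqv ⟨e, heE⟩).val, hlt⟩ = e := by rw [Fin.eta]; exact hFj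
      rw [hFe, if_pos hes]
      omega
    · -- case 2: Frankl set eᶜ
      have hcase : (e ∩ v).card + s + 2 * t ≤ (e \ v).card := by omega
      have hc : eᶜ.card = n - e.card := by
        rw [Finset.card_compl, Fintype.card_fin]
      have hvc : v ∩ eᶜ = v \ e := (Finset.sdiff_eq_inter_compl v e).symm
      have h3 : (v \ e).card + (v ∩ e).card = v.card := Finset.card_sdiff_add_card_inter v e
      have hn' : n % 2 = 0 := Nat.even_iff.mp hn
      have hen : e.card ≤ n := by
        calc e.card ≤ V.card := Finset.card_le_card (hEV e heE)
        _ ≤ n := by simpa using Finset.card_le_univ V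
      have hgoal2 : eᶜ.card + s ≤ 2 * (v ∩ eᶜ).card := by
        rw [hvc, hc]; omega
      have hcs : s ≤ eᶜ.card := by
        have := Finset.card_le_card (Finset.inter_subset_right : v ∩ eᶜ ⊆ eᶜ)
        omega
      refine ⟨⟨m + (eqv ⟨e, heE⟩).val, by omega⟩, ?_⟩
      have hnlt : ¬ (m + (eqv ⟨e, heE⟩).val < m) := by omega
      dsimp only
      rw [dif_neg hnlt]
      have hF : ∀ (hp : m + (eqv ⟨e, heE⟩).val - m < m),
          F ⟨m + (eqv ⟨e, heE⟩).val - m, hp⟩ = e := by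
        intro hp
        have : (⟨m + (eqv ⟨e, heE⟩).val - m, hp⟩ : Fin m) = eqv ⟨e, heE⟩ := by
          ext; simp
        rw [this, hFj]
      rw [hF, if_pos hcs]
      exact hgoal2
end

section
/- Let M = (h_{ij}) be an m×m matrix with entries ±1, pairwise orthogonal rows, and whose first row and first column consist entirely of ones. For i = 1, …, m let e_i = { j : h_{ij} = 1 }. Then for every real number t and every vector v ∈ {±1}^m there exists an index i such that |Σ_{j ∈ e_i} v_j + t| ≥ √(m − 1)/2. In particular, the hypergraph with edges e_1,…,e_m has t-shifted discrepancy at least √(m−1)/2 for every t. -/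
/-- Let `M` be an `m × m` matrix with `±1` entries, pairwise orthogonal rows, whose first row
and first column are all ones.  Let `e_i = { j : M i j = 1 }`.  Then for every real `t` and
every `±1`-vector `v` there is an index `i` with `|Σ_{j ∈ e_i} v_j + t| ≥ √(m − 1)/2`.
(In particular the hypergraph with edges `e_1, …, e_m` has `t`-shifted discrepancy at least
`√(m − 1)/2` for every `t`.) -/
theorem hadamard_shifted_discrepancy (m : ℕ) (hm : 0 < m) (M : Matrix (Fin m) (Fin m) ℝ)
    (hpm : ∀ i j, M i j = 1 ∨ M i j = -1)
    (horth : ∀ i j, i ≠ j → ∑ k, M i k * M j k = 0)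
    (hrow : ∀ j, M ⟨0, hm⟩ j = 1) (hcol : ∀ i, M i ⟨0, hm⟩ = 1)
    (t : ℝ) (v : Fin m → ℝ) (hv : ∀ j, v j = 1 ∨ v j = -1) :
    ∃ i, Real.sqrt ((m : ℝ) - 1) / 2 ≤
      |(∑ j ∈ Finset.univ.filter (fun j => M i j = 1), v j) + t| := by
  classical
  set z : Fin m := ⟨0, hm⟩ with hz
  set u : Fin m → ℝ := fun i => ∑ j, M i j * v j with hu
  set σ : ℝ := ∑ j, v j with hσ
  set a : ℝ := σ + 2 * t with ha
  have hm' : (m : ℝ) ≠ 0 := Nat.cast_ne_zero.mpr hm.ne'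
  have hsq : ∀ i j, M i j * M i j = 1 := by
    intro i j; rcases hpm i j with h | h <;> rw [h] <;> ring
  have hvsq : ∀ j, v j * v j = 1 := by
    intro j; rcases hv j with h | h <;> rw [h] <;> ring
  -- M * Mᵀ = m • 1
  have hMMT : M * M.transpose = (m : ℝ) • 1 := by
    ext i j
    simp only [Matrix.mul_apply, Matrix.transpose_apply, Matrix.smul_apply,
      Matrix.one_apply, smul_eq_mul]
    by_cases h : i = j
    · subst h; simp [hsq]
    · rw [horth i j h]; simp [h]
  -- Mᵀ * M = m • 1
  have hMTM : M.transpose * M = (m : ℝ) • 1 := by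
    have h1 : M * ((m : ℝ)⁻¹ • M.transpose) = 1 := by
      rw [Matrix.mul_smul, hMMT, smul_smul, inv_mul_cancel₀ hm', one_smul]
    have h2 := mul_eq_one_comm.mp h1
    calc M.transpose * M = (m : ℝ) • (((m:ℝ)⁻¹ • M.transpose) * M) := by
          rw [Matrix.smul_mul, smul_smul, mul_inv_cancel₀ hm', one_smul]
      _ = (m : ℝ) • 1 := by rw [h2]
  -- column orthogonality
  have hcolorth : ∀ j k : Fin m, ∑ i, M i j * M i k = if j = k then (m:ℝ) else 0 := by
    intro j k
    have h : (M.transpose * M) j k = ((m:ℝ) • (1 : Matrix (Fin m) (Fin m) ℝ)) j k := by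
      rw [hMTM]
    simpa [Matrix.mul_apply, Matrix.transpose_apply, Matrix.one_apply,
      mul_ite, mul_one, mul_zero] using h
  -- column sums
  have hcolsum : ∀ j : Fin m, ∑ i, M i j = if j = z then (m:ℝ) else 0 := by
    intro j
    have := hcolorth j z
    simpa [hcol] using this
  -- sum of squares of u
  have hsumsq : ∑ i, (u i) ^ 2 = (m : ℝ) ^ 2 := by
    have h1 : ∀ i, (u i) ^ 2 = ∑ j, ∑ k, (M i j * M i k) * (v j * v k) := by
      intro i
      rw [hu, sq, Finset.sum_mul_sum]
      refine Finset.sum_congr rfl fun j _ => Finset.sum_congr rfl fun k _ => by ring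
    calc ∑ i, (u i) ^ 2 = ∑ i, ∑ j, ∑ k, (M i j * M i k) * (v j * v k) := by
          exact Finset.sum_congr rfl fun i _ => h1 i
      _ = ∑ j, ∑ k, (∑ i, M i j * M i k) * (v j * v k) := by
          rw [Finset.sum_comm]
          refine Finset.sum_congr rfl fun j _ => ?_
          rw [Finset.sum_comm]
          refine Finset.sum_congr rfl fun k _ => ?_
          rw [Finset.sum_mul]
      _ = ∑ j, (m : ℝ) * (v j * v j) := by
          refine Finset.sum_congr rfl fun j _ => ?_
          rw [Finset.sum_eq_single j]
          · rw [hcolorth j j]; simp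
          · intro k _ hk
            rw [hcolorth j k, if_neg (Ne.symm hk), zero_mul]
          · simp
      _ = (m : ℝ) ^ 2 := by simp [hvsq]; rw [sq]
  -- sum of u
  have hsumu : ∑ i, u i = (m : ℝ) * v z := by
    calc ∑ i, u i = ∑ j, (∑ i, M i j) * v j := by
          rw [hu, Finset.sum_comm]
          exact Finset.sum_congr rfl fun j _ => by rw [Finset.sum_mul]
      _ = (m : ℝ) * v z := by
          rw [Finset.sum_eq_single z]
          · rw [hcolsum z, if_pos rfl]
          · intro k _ hk; rw [hcolsum k, if_neg hk, zero_mul]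
          · simp
  -- the key quadratic sum
  have hkey : (m : ℝ) * ((m : ℝ) - 1) ≤ ∑ i, (u i + a) ^ 2 := by
    have hexp : ∑ i, (u i + a) ^ 2
        = ∑ i, (u i) ^ 2 + 2 * a * ∑ i, u i + (m : ℝ) * a ^ 2 := by
      have h0 : ∀ i : Fin m, (u i + a) ^ 2 = u i ^ 2 + 2 * a * u i + a ^ 2 :=
        fun i => by ring
      simp only [h0]
      rw [Finset.sum_add_distrib, Finset.sum_add_distrib, Finset.mul_sum,
        Finset.sum_const, Finset.card_univ, Fintype.card_fin, nsmul_eq_mul]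
    have : ∑ i, (u i + a) ^ 2 = (m:ℝ) * ((a + v z) ^ 2 + ((m:ℝ) - 1)) := by
      rw [hexp, hsumsq, hsumu]
      have := hvsq z
      nlinarith [hvsq z]
    rw [this]
    nlinarith [sq_nonneg (a + v z), (Nat.one_le_cast (α := ℝ)).mpr hm]
  -- extract an index
  have hex : ∃ i : Fin m, (m : ℝ) - 1 ≤ (u i + a) ^ 2 := by
    by_contra hcon
    push_neg at hcon
    have hlt : ∑ i, (u i + a) ^ 2 < ∑ _i : Fin m, ((m : ℝ) - 1) := by
      refine Finset.sum_lt_sum_of_nonempty ?_ fun i _ => hcon i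
      exact Finset.univ_nonempty_iff.mpr (Fin.pos_iff_nonempty.mp hm)
    rw [Finset.sum_const, Finset.card_univ, Fintype.card_fin, nsmul_eq_mul] at hlt
    linarith
  obtain ⟨i, hi⟩ := hex
  refine ⟨i, ?_⟩
  -- relate the filtered sum to u i
  set S : ℝ := ∑ j ∈ Finset.univ.filter (fun j => M i j = 1), v j with hS
  have husplit : u i = 2 * S - σ := by
    have h1 : u i = (∑ j ∈ Finset.univ.filter (fun j => M i j = 1), M i j * v j)
        + ∑ j ∈ Finset.univ.filter (fun j => ¬ M i j = 1), M i j * v j := by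
      rw [hu]
      exact (Finset.sum_filter_add_sum_filter_not _ _ _).symm
    have h2 : σ = S + ∑ j ∈ Finset.univ.filter (fun j => ¬ M i j = 1), v j := by
      rw [hσ, hS]
      exact (Finset.sum_filter_add_sum_filter_not _ _ _).symm
    have h3 : ∑ j ∈ Finset.univ.filter (fun j => M i j = 1), M i j * v j = S := by
      rw [hS]
      refine Finset.sum_congr rfl fun j hj => ?_
      rw [Finset.mem_filter] at hj
      rw [hj.2, one_mul]
    have h4 : ∑ j ∈ Finset.univ.filter (fun j => ¬ M i j = 1), M i j * v j
        = - ∑ j ∈ Finset.univ.filter (fun j => ¬ M i j = 1), v j := by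
      rw [← Finset.sum_neg_distrib]
      refine Finset.sum_congr rfl fun j hj => ?_
      rw [Finset.mem_filter] at hj
      rcases hpm i j with h | h
      · exact absurd h hj.2
      · rw [h]; ring
    rw [h1, h3, h4]
    linarith
  have hrel : S + t = (u i + a) / 2 := by
    rw [husplit, ha]; ring
  have habs : Real.sqrt ((m:ℝ) - 1) ≤ |u i + a| := by
    have := Real.sqrt_le_sqrt hi
    rwa [Real.sqrt_sq_eq_abs] at this
  rw [hrel]
  rw [abs_div, abs_two]
  linarith
end

section
/- Let n be even and 1 ≤ s ≤ n/2, and let α = max over A ⊆ {1,…,n} with |A| ≥ s of |I_A|, where I_A = { v : |v| = n/2, 2·|v ∩ A| ≥ |A| + s }. Then the F-chromatic number of the generalized Kneser graph K(n, n/2, s) is at most (C(n, n/2) / α) · (1 + ln α). -/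
/-!
Every `(n/2)`-set lies in equally many translates `σ • I_A` (`σ ∈ Sym n`) of a Frankl set, so
the uniform weight on these translates is a fractional cover of value `C(n, n/2) / |I_A|`.
By Lovász's argument the greedy cover by translates is at most `H(|I_A|)` times larger: charge
`1/k` to each vertex newly covered by a greedy set covering `k` new vertices. While a set has
`j` uncovered vertices, those covered next are charged at most `1/j` each, so every set carries
total charge at most `H(|I_A|) ≤ 1 + ln |I_A|`.
-/

open Finset
open scoped Pointwise

theorem harmonic_add_sub_div_le {a b k : ℕ} (hab : a ≤ b) (hbk : b ≤ k) :
    harmonic a + (b - a : ℚ) / k ≤ harmonic b := by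
  induction b, hab using Nat.le_induction with
  | base => simp
  | succ b hab ih =>
    have hk : (0 : ℚ) < k := by exact_mod_cast (Nat.succ_pos b).trans_le hbk
    have hinv : (k : ℚ)⁻¹ ≤ (↑(b + 1))⁻¹ := inv_anti₀ (by positivity) (by exact_mod_cast hbk)
    rw [harmonic_succ]
    calc harmonic a + ((b + 1 : ℕ) - a : ℚ) / k
        = harmonic a + (b - a : ℚ) / k + (k : ℚ)⁻¹ := by push_cast; ring
      _ ≤ harmonic b + (↑(b + 1))⁻¹ := add_le_add (ih (by omega)) hinv

theorem harmonic_mono : Monotone harmonic := fun a b hab => by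
  have := harmonic_add_sub_div_le hab le_rfl
  have : (0 : ℚ) ≤ (b - a : ℚ) / b := div_nonneg (by simp [hab]) (by positivity)
  linarith

section Cover

variable {ι α : Type*} [Fintype ι] [DecidableEq ι] [DecidableEq α]

theorem exists_greedy_cover (F : ι → Finset α) (W : Finset α) (hW : ∀ v ∈ W, ∃ i, v ∈ F i) :
    ∃ (L : Finset ι) (c : α → ℚ), (∀ v, 0 ≤ c v) ∧ (∀ v ∈ W, ∃ i ∈ L, v ∈ F i) ∧
      (L.card : ℚ) ≤ ∑ v ∈ W, c v ∧ ∀ i, ∑ v ∈ W ∩ F i, c v ≤ harmonic (W ∩ F i).card := by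
  induction W using Finset.strongInduction with
  | H W ih =>
  rcases W.eq_empty_or_nonempty with rfl | ⟨v₀, hv₀⟩
  · exact ⟨∅, 0, fun _ => le_rfl, by simp, by simp, by simp⟩
  obtain ⟨i₀, hi₀⟩ := hW v₀ hv₀
  obtain ⟨j, -, hmax⟩ := exists_max_image univ (fun i => (W ∩ F i).card) ⟨i₀, mem_univ _⟩
  set k := (W ∩ F j).card
  have hk : 0 < k := (card_pos.2 ⟨v₀, mem_inter.2 ⟨hv₀, hi₀⟩⟩).trans_le (hmax i₀ (mem_univ _))
  have hlt : W \ F j ⊂ W := by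
    obtain ⟨w, hw⟩ := card_pos.1 hk
    exact (ssubset_iff_of_subset sdiff_subset).2
      ⟨w, (mem_inter.1 hw).1, fun h => (mem_sdiff.1 h).2 (mem_inter.1 hw).2⟩
  obtain ⟨L, c, hc, hcov, hcard, hbound⟩ := ih _ hlt fun v hv => hW v (mem_sdiff.1 hv).1
  set c' : α → ℚ := fun v => if v ∈ F j then (k : ℚ)⁻¹ else c v
  have hsum : ∀ S : Finset α,
      ∑ v ∈ S, c' v = (S ∩ F j).card * (k : ℚ)⁻¹ + ∑ v ∈ S \ F j, c v := by
    intro S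
    rw [sum_ite, sum_const, nsmul_eq_mul, filter_mem_eq_inter, filter_not, filter_mem_eq_inter,
      sdiff_inter_self_left]
  refine ⟨insert j L, c', fun v => ?_, fun v hv => ?_, ?_, fun i => ?_⟩
  · simp only [c']
    split_ifs
    exacts [by positivity, hc v]
  · by_cases hvj : v ∈ F j
    · exact ⟨j, mem_insert_self j L, hvj⟩
    · obtain ⟨i, hi, hvi⟩ := hcov v (mem_sdiff.2 ⟨hv, hvj⟩)
      exact ⟨i, mem_insert_of_mem hi, hvi⟩
  · have hk' : (k : ℚ) ≠ 0 := by exact_mod_cast hk.ne'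
    calc ((insert j L).card : ℚ) ≤ L.card + 1 := by exact_mod_cast card_insert_le j L
      _ ≤ ∑ v ∈ W \ F j, c v + k * (k : ℚ)⁻¹ := by rw [mul_inv_cancel₀ hk']; linarith
      _ = ∑ v ∈ W, c' v := by rw [hsum]; ring
  · have hsplit := card_inter_add_card_sdiff (W ∩ F i) (F j)
    rw [← sdiff_inter_right_comm] at hsplit
    have hi : (W ∩ F i).card ≤ k := hmax i (mem_univ i)
    calc ∑ v ∈ W ∩ F i, c' v
        = (W ∩ F i ∩ F j).card * (k : ℚ)⁻¹ + ∑ v ∈ W \ F j ∩ F i, c v := by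
          rw [hsum, sdiff_inter_right_comm]
      _ ≤ harmonic (W \ F j ∩ F i).card + ((W ∩ F i).card - (W \ F j ∩ F i).card : ℚ) / k := by
          rw [add_comm, div_eq_mul_inv]
          gcongr
          · exact hbound i
          · exact le_of_eq (by rw [← hsplit]; push_cast; ring)
      _ ≤ harmonic (W ∩ F i).card := harmonic_add_sub_div_le (by omega) hi

theorem exists_cover_card_le_harmonic_mul (F : ι → Finset α) (W : Finset α) {Δ : ℕ}
    (hΔ : ∀ i, (W ∩ F i).card ≤ Δ) (w : ι → ℚ) (hw : ∀ i, 0 ≤ w i)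
    (hwW : ∀ v ∈ W, 1 ≤ ∑ i with v ∈ F i, w i) :
    ∃ L : Finset ι, (∀ v ∈ W, ∃ i ∈ L, v ∈ F i) ∧ (L.card : ℚ) ≤ harmonic Δ * ∑ i, w i := by
  have hW : ∀ v ∈ W, ∃ i, v ∈ F i := by
    intro v hv
    by_contra! h
    have h₀ : ∑ i with v ∈ F i, w i = 0 := by simp [h]
    linarith [hwW v hv]
  obtain ⟨L, c, hc, hcov, hcard, hbound⟩ := exists_greedy_cover F W hW
  refine ⟨L, hcov, ?_⟩
  calc (L.card : ℚ) ≤ ∑ v ∈ W, c v := hcard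
    _ ≤ ∑ v ∈ W, c v * ∑ i with v ∈ F i, w i :=
        sum_le_sum fun v hv => le_mul_of_one_le_right (hc v) (hwW v hv)
    _ = ∑ i, w i * ∑ v ∈ W ∩ F i, c v := by
        simp_rw [← filter_mem_eq_inter, sum_filter, mul_sum, mul_ite, mul_zero]
        rw [sum_comm]
        simp_rw [mul_comm]
    _ ≤ ∑ i, w i * harmonic Δ :=
        sum_le_sum fun i _ => mul_le_mul_of_nonneg_left
          ((hbound i).trans (harmonic_mono (hΔ i))) (hw i)
    _ = harmonic Δ * ∑ i, w i := by rw [mul_sum]; simp_rw [mul_comm]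

theorem exists_smul_cover_card_le {G : Type*} [Group G] [Fintype G] [DecidableEq G]
    [MulAction G α] (E W : Finset α) (hE : E.Nonempty) (hEW : ∀ g : G, g • E ⊆ W)
    (hW : ∀ v ∈ W, ∀ u ∈ W, ∃ g : G, g • v = u) :
    ∃ L : Finset G, (∀ v ∈ W, ∃ g ∈ L, v ∈ g • E) ∧
      (L.card : ℚ) ≤ harmonic E.card * (W.card / E.card) := by
  set d : α → ℕ := fun v => #{g : G | v ∈ g • E}
  have hd : ∀ v ∈ W, ∀ u ∈ W, d v = d u := by
    intro v hv u hu
    obtain ⟨h, rfl⟩ := hW v hv u hu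
    exact card_equiv (Equiv.mulLeft h) fun g => by simp [mul_smul]
  have hdouble : ∀ v ∈ W, W.card * d v = Fintype.card G * E.card := by
    intro v hv
    calc W.card * d v = ∑ u ∈ W, d u := by rw [sum_congr rfl fun u hu => hd u hu v hv]; simp
      _ = ∑ g : G, #{u ∈ W | u ∈ g • E} :=
        sum_card_bipartiteAbove_eq_sum_card_bipartiteBelow (fun u (g : G) => u ∈ g • E)
      _ = Fintype.card G * E.card := by
        simp_rw [filter_mem_eq_inter, inter_eq_right.2 (hEW _), card_smul_finset]
        simp
  have hE₀ : (0 : ℚ) < E.card := by exact_mod_cast hE.card_pos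
  have hG₀ : (0 : ℚ) < Fintype.card G := by exact_mod_cast Fintype.card_pos
  set w : ℚ := W.card / (Fintype.card G * E.card) with hw_def
  have hw : ∀ v ∈ W, 1 ≤ ∑ g : G with v ∈ g • E, w := by
    intro v hv
    rw [sum_const, nsmul_eq_mul, ← mul_div_assoc, le_div_iff₀ (by positivity), one_mul]
    exact_mod_cast ((hdouble v hv).symm.trans (mul_comm _ _)).le
  obtain ⟨L, hL, hcard⟩ := exists_cover_card_le_harmonic_mul (fun g : G => g • E) W
    (fun g => (card_le_card inter_subset_right).trans (card_smul_finset g E).le)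
    (fun _ => w) (fun _ => by positivity) hw
  refine ⟨L, hL, hcard.trans_eq ?_⟩
  rw [sum_const, card_univ, nsmul_eq_mul, hw_def]
  field_simp

end Cover

section Frankl

variable {X : Type*} [Fintype X] [DecidableEq X] {k s : ℕ} {A v : Finset X}

def franklSet (k s : ℕ) (A : Finset X) : Finset (Finset X) :=
  univ.filter fun v => v.card = k ∧ A.card + s ≤ 2 * (v ∩ A).card

theorem mem_franklSet : v ∈ franklSet k s A ↔ v.card = k ∧ A.card + s ≤ 2 * (v ∩ A).card := by
  simp [franklSet]

theorem smul_mem_franklSet_smul_iff {G : Type*} [Group G] [MulAction G X] (g : G) :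
    g • v ∈ franklSet k s (g • A) ↔ v ∈ franklSet k s A := by
  simp only [mem_franklSet, ← smul_finset_inter, card_smul_finset]

theorem exists_franklSet_nonempty (hsk : s ≤ k) (hk : k ≤ Fintype.card X) :
    ∃ A : Finset X, A.card = s ∧ (franklSet k s A).Nonempty := by
  obtain ⟨v, -, hv⟩ := exists_subset_card_eq (s := (univ : Finset X)) (by simpa using hk)
  obtain ⟨A, hAv, hA⟩ := exists_subset_card_eq (hsk.trans_eq hv.symm)
  refine ⟨A, hA, v, mem_franklSet.2 ⟨hv, ?_⟩⟩
  rw [inter_eq_right.2 hAv, hA]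
  omega

theorem exists_smul_franklSet_cover (hA : (franklSet k s A).Nonempty) :
    ∃ L : Finset (Equiv.Perm X),
      (∀ v : Finset X, v.card = k → ∃ σ ∈ L, v ∈ franklSet k s (σ • A)) ∧
      (L.card : ℚ) ≤ harmonic (franklSet k s A).card *
        ((Fintype.card X).choose k / (franklSet k s A).card) := by
  have hEW : ∀ σ : Equiv.Perm X, σ • franklSet k s A ⊆ powersetCard k univ := by
    intro σ v hv
    obtain ⟨u, hu, rfl⟩ := mem_smul_finset.1 hv
    simp [card_smul_finset, (mem_franklSet.1 hu).1]
  have hW : ∀ v ∈ powersetCard k (univ : Finset X), ∀ u ∈ powersetCard k univ,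
      ∃ σ : Equiv.Perm X, σ • v = u := by
    intro v hv u hu
    have := Set.powersetCard.isPretransitive (α := X) (n := k)
    obtain ⟨σ, hσ⟩ := MulAction.exists_smul_eq (Equiv.Perm X)
      (⟨v, (mem_powersetCard.1 hv).2⟩ : Set.powersetCard X k) ⟨u, (mem_powersetCard.1 hu).2⟩
    exact ⟨σ, congrArg Subtype.val hσ⟩
  obtain ⟨L, hL, hcard⟩ := exists_smul_cover_card_le _ _ hA hEW hW
  refine ⟨L, fun v hv => ?_, by simpa using hcard⟩
  obtain ⟨σ, hσ, hvσ⟩ := hL v (by simpa using hv)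
  obtain ⟨u, hu, rfl⟩ := mem_smul_finset.1 hvσ
  exact ⟨σ, hσ, (smul_mem_franklSet_smul_iff σ).2 hu⟩

end Frankl

theorem fChromatic_le_fractional_general (n s α : ℕ) (hsn : s ≤ n / 2)
    (hα : IsGreatest {k : ℕ | ∃ A : Finset (Fin n), s ≤ A.card ∧
      k = (Finset.univ.filter (fun v : Finset (Fin n) =>
            v.card = n / 2 ∧ A.card + s ≤ 2 * (v ∩ A).card)).card} α) :
    ∃ (q : ℕ) (A : Fin q → Finset (Fin n)),
      (q : ℝ) ≤ ((Nat.choose n (n / 2) : ℝ) / (α : ℝ)) * (1 + Real.log (α : ℝ)) ∧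
      (∀ i, s ≤ (A i).card) ∧
      ∀ v : Finset (Fin n), v.card = n / 2 →
        ∃ i, (A i).card + s ≤ 2 * (v ∩ A i).card := by
  obtain ⟨⟨A, hsA, hαA⟩, hmax⟩ := hα
  change α = (franklSet (n / 2) s A).card at hαA
  obtain ⟨B, hB, hBF⟩ := exists_franklSet_nonempty (X := Fin n) hsn (by simp [Nat.div_le_self])
  have hAF : (franklSet (n / 2) s A).Nonempty :=
    card_pos.1 (hαA ▸ hBF.card_pos.trans_le (hmax ⟨B, hB.ge, rfl⟩))
  obtain ⟨L, hL, hcard⟩ := exists_smul_franklSet_cover hAF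
  rw [← hαA, Fintype.card_fin] at hcard
  refine ⟨L.card, fun i => (L.equivFin.symm i : Equiv.Perm (Fin n)) • A, ?_, fun i => ?_, ?_⟩
  · have hcardℝ := (Rat.cast_le (K := ℝ)).2 hcard
    push_cast at hcardℝ
    calc (L.card : ℝ) ≤ harmonic α * (n.choose (n / 2) / α) := hcardℝ
      _ ≤ (1 + Real.log α) * (n.choose (n / 2) / α) := by gcongr; exact harmonic_le_one_add_log α
      _ = _ := mul_comm _ _
  · simpa [card_smul_finset] using hsA
  · intro v hv
    obtain ⟨σ, hσ, hvσ⟩ := hL v hv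
    exact ⟨L.equivFin ⟨σ, hσ⟩, by simpa using (mem_franklSet.1 hvσ).2⟩

/-- Let `n` be even, `1 ≤ s ≤ n/2`, and let `α` be the maximum of `|I_A|` over all
`A ⊆ {1,…,n}` with `|A| ≥ s`, where `I_A = { v : |v| = n/2, 2·|v ∩ A| ≥ |A| + s }`.
Then the F-chromatic number of `K(n, n/2, s)` is at most `(C(n, n/2)/α)·(1 + ln α)`:
there is a cover of all `(n/2)`-element subsets of `{1,…,n}` by `q` Frankl sets with
`q ≤ (C(n, n/2)/α)·(1 + ln α)`. -/
theorem fChromatic_le_fractional (n s α : ℕ) (hn : Even n) (hs : 1 ≤ s) (hsn : s ≤ n / 2)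
    (hα : IsGreatest {k : ℕ | ∃ A : Finset (Fin n), s ≤ A.card ∧
      k = (Finset.univ.filter (fun v : Finset (Fin n) =>
            v.card = n / 2 ∧ A.card + s ≤ 2 * (v ∩ A).card)).card} α) :
    ∃ (q : ℕ) (A : Fin q → Finset (Fin n)),
      (q : ℝ) ≤ ((Nat.choose n (n / 2) : ℝ) / (α : ℝ)) * (1 + Real.log (α : ℝ)) ∧
      (∀ i, s ≤ (A i).card) ∧
      ∀ v : Finset (Fin n), v.card = n / 2 →
        ∃ i, (A i).card + s ≤ 2 * (v ∩ A i).card :=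
  fChromatic_le_fractional_general n s α hsn hα
end

section
/- Let r ≥ 2, s ≥ 1, t ≥ 0 with r dividing n, and let H = (V, E) be a finite hypergraph with |V| ≤ n whose (tr/2)-shifted r-centered discrepancy exceeds (r(r−1)(s−1) + rt)/2; that is, for every 2-coloring of V there is an edge e ∈ E with |(r−1)·blue(e) − red(e) + tr/2| > (r(r−1)(s−1) + rt)/2. Then the chromatic number of the generalized Kneser hypergraph KH(n, r, n/r − t, s) is at most 2·|E|: there is a coloring of all (n/r − t)-element subsets of {1,…,n} in 2·|E| colors such that no r distinct subsets v_1, …, v_r with pairwise intersections of size < s all receive the same color. -/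
open Finset

private lemma knh_pt1 (m : ℕ) : 2*m ≤ 2*(if 1 ≤ m then 1 else 0) + m*(m-1) := by
  rcases m with _|(_|m)
  · simp
  · simp
  · simp only [Nat.add_sub_cancel, if_pos (by omega : 1 ≤ m+2)]; nlinarith

private lemma knh_pt2 (m : ℕ) : 2*m ≤ 2 + m*(m-1) := by
  rcases m with _|(_|m)
  · simp
  · simp
  · simp only [Nat.add_sub_cancel]; nlinarith

private lemma knh_mul_sub_one (c : ℕ) : c * c - c = c * (c - 1) := by
  cases c with
  | zero => simp
  | succ d => rw [Nat.succ_sub_one, Nat.mul_succ, Nat.add_sub_cancel]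

private lemma knh_dc1 {n r : ℕ} (v : Fin r → Finset (Fin n)) (F : Finset (Fin n)) :
    ∑ x ∈ F, (Finset.univ.filter (fun i => x ∈ v i)).card = ∑ i, (F ∩ v i).card := by
  simp only [Finset.card_filter]
  rw [Finset.sum_comm]
  refine Finset.sum_congr rfl fun i _ => ?_
  rw [← Finset.card_filter, Finset.filter_mem_eq_inter]

private lemma knh_dc2 {n r : ℕ} (v : Fin r → Finset (Fin n)) :
    ∑ x : Fin n, (Finset.univ.filter (fun i => x ∈ v i)).card *
      ((Finset.univ.filter (fun i => x ∈ v i)).card - 1)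
    = ∑ p ∈ (Finset.univ : Finset (Fin r)).offDiag, (v p.1 ∩ v p.2).card := by
  have h1 : ∀ x : Fin n, (Finset.univ.filter (fun i => x ∈ v i)).card *
      ((Finset.univ.filter (fun i => x ∈ v i)).card - 1)
      = ∑ p ∈ (Finset.univ : Finset (Fin r)).offDiag,
          if x ∈ v p.1 ∧ x ∈ v p.2 then 1 else 0 := by
    intro x
    rw [← knh_mul_sub_one, ← Finset.offDiag_card, ← Finset.card_filter]
    congr 1
    ext p
    simp only [Finset.mem_offDiag, Finset.mem_filter, Finset.mem_univ, true_and]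
    tauto
  rw [Finset.sum_congr rfl fun x _ => h1 x, Finset.sum_comm]
  refine Finset.sum_congr rfl fun p _ => ?_
  rw [← Finset.card_filter]
  congr 1
  ext x
  simp

/-- Let `r ≥ 2`, `s ≥ 1`, `t ≥ 0` with `r ∣ n`, and let `H = (V, E)` be a finite hypergraph
with `|V| ≤ n` (realized as `V ⊆ {1,…,n}`) whose `(tr/2)`-shifted `r`-centered discrepancy
exceeds `(r(r−1)(s−1) + rt)/2`: for every 2-coloring of `V` (given by its blue set `B ⊆ V`)
there is an edge `e ∈ E` with `|(r−1)·blue(e) − red(e) + tr/2| > (r(r−1)(s−1) + rt)/2`.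
Then the chromatic number of the generalized Kneser hypergraph `KH(n, r, n/r − t, s)` is at
most `2·|E|`: there is a coloring of all `(n/r − t)`-element subsets of `{1,…,n}` in
`2·|E|` colors with no `r` pairwise distinct subsets having pairwise intersections of size
`< s` all of the same color. -/
theorem kneserHypergraph_chromatic_of_discrepancy (n r s t : ℕ) (hr : 2 ≤ r) (hs : 1 ≤ s)
    (hrn : r ∣ n) (V : Finset (Fin n)) (E : Finset (Finset (Fin n)))
    (hEV : ∀ e ∈ E, e ⊆ V)
    (hdisc : ∀ B : Finset (Fin n), B ⊆ V → ∃ e ∈ E,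
      ((r : ℝ) * ((r : ℝ) - 1) * ((s : ℝ) - 1) + (r : ℝ) * (t : ℝ)) / 2 <
        |((r : ℝ) - 1) * ((e ∩ B).card : ℝ) - ((e \ B).card : ℝ) + (t : ℝ) * (r : ℝ) / 2|) :
    ∃ f : Finset (Fin n) → Fin (2 * E.card),
      ∀ v : Fin r → Finset (Fin n), (∀ i, (v i).card = n / r - t) →
        Function.Injective v → (∀ i j, i ≠ j → ((v i) ∩ (v j)).card < s) →
        ∃ i j, f (v i) ≠ f (v j) := by
  classical
  set D : ℝ := ((r : ℝ) * ((r : ℝ) - 1) * ((s : ℝ) - 1) + (r : ℝ) * (t : ℝ)) / 2 with hD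
  have key : ∀ A : Finset (Fin n), ∃ e ∈ E, D <
      |((r : ℝ) - 1) * ((e ∩ A).card : ℝ) - ((e \ A).card : ℝ) + (t : ℝ) * (r : ℝ) / 2| := by
    intro A
    obtain ⟨e, he, hlt⟩ := hdisc (A ∩ V) inter_subset_right
    have h1 : e ∩ (A ∩ V) = e ∩ A := by
      ext x; simp only [mem_inter]
      exact ⟨fun h => ⟨h.1, h.2.1⟩, fun h => ⟨h.1, h.2, hEV e he h.1⟩⟩
    have h2 : e \ (A ∩ V) = e \ A := by
      ext x; simp only [mem_sdiff, mem_inter]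
      constructor
      · rintro ⟨hx, hn⟩; exact ⟨hx, fun hA => hn ⟨hA, hEV e he hx⟩⟩
      · rintro ⟨hx, hn⟩; exact ⟨hx, fun h => hn h.1⟩
    rw [h1, h2] at hlt
    exact ⟨e, he, hlt⟩
  choose ed hedE hedX using key
  set sgn : Finset (Fin n) → Bool := fun A => decide
    (0 ≤ ((r : ℝ) - 1) * (((ed A) ∩ A).card : ℝ) - (((ed A) \ A).card : ℝ)
        + (t : ℝ) * (r : ℝ) / 2) with hsgndef
  have hcard : Fintype.card ({x // x ∈ E} × Bool) = 2 * E.card := by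
    simp [mul_comm]
  set eqv : ({x // x ∈ E} × Bool) ≃ Fin (2 * E.card) := Fintype.equivFinOfCardEq hcard
    with heqv
  refine ⟨fun A => eqv (⟨ed A, hedE A⟩, sgn A), ?_⟩
  intro v hk hinj hint
  by_contra hcon
  push_neg at hcon
  set i0 : Fin r := ⟨0, by omega⟩ with hi0
  rcases Nat.eq_zero_or_pos (n / r - t) with hk0 | hkpos
  · -- degenerate case: all sets are empty, contradicting injectivity
    have ha := hk i0
    have hb := hk ⟨1, by omega⟩
    rw [hk0] at ha hb
    have h01 : v i0 = v ⟨1, by omega⟩ := by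
      rw [Finset.card_eq_zero.mp ha, Finset.card_eq_zero.mp hb]
    have h2 := hinj h01
    exact absurd (congrArg Fin.val h2) (by simp [hi0])
  -- main case
  have hsame : ∀ i : Fin r, ed (v i) = ed (v i0) ∧ sgn (v i) = sgn (v i0) := by
    intro i
    have h := eqv.injective (hcon i i0)
    exact ⟨congrArg (fun p => (Prod.fst p).1) h, congrArg Prod.snd h⟩
  set e : Finset (Fin n) := ed (v i0) with hedef
  set k := n / r - t with hkdef
  have hnr : r * (n / r) = n := Nat.mul_div_cancel' hrn
  have htle : t ≤ n / r := by omega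
  have hkt : r * k + r * t = n := by
    rw [hkdef, ← Nat.mul_add, Nat.sub_add_cancel htle, hnr]
  set X : Fin r → ℝ := fun i =>
    ((r : ℝ) - 1) * ((e ∩ v i).card : ℝ) - ((e \ v i).card : ℝ) + (t : ℝ) * (r : ℝ) / 2
    with hX
  have hXabs : ∀ i, D < |X i| := by
    intro i
    have h := hedX (v i)
    rw [(hsame i).1] at h
    simpa only [hX] using h
  have hsgnX : ∀ i, sgn (v i) = decide (0 ≤ X i) := by
    intro i
    simp only [hsgndef, hX]
    rw [(hsame i).1]
  -- counting
  set m : Fin n → ℕ := fun x => (Finset.univ.filter (fun i => x ∈ v i)).card with hm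
  set S := ∑ i, (e ∩ v i).card with hSdef
  set P := ∑ x : Fin n, m x * (m x - 1) with hPdef
  have hPle : P ≤ r * (r-1) * (s-1) := by
    rw [hPdef]
    simp only [hm]
    rw [knh_dc2 v]
    calc ∑ p ∈ (Finset.univ : Finset (Fin r)).offDiag, (v p.1 ∩ v p.2).card
        ≤ ∑ _p ∈ (Finset.univ : Finset (Fin r)).offDiag, (s-1) := by
          refine Finset.sum_le_sum fun p hp => ?_
          have hne := (Finset.mem_offDiag.mp hp).2.2
          have := hint p.1 p.2 hne
          omega
      _ = (Finset.univ : Finset (Fin r)).offDiag.card * (s-1) := by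
          rw [Finset.sum_const, smul_eq_mul]
      _ = (r * r - r) * (s-1) := by
          rw [Finset.offDiag_card, Finset.card_univ, Fintype.card_fin]
      _ = r * (r-1) * (s-1) := by rw [knh_mul_sub_one]
  have hSm : ∑ x ∈ e, m x = S := by
    rw [hSdef]; simp only [hm]; exact knh_dc1 v e
  have hUB : 2 * S ≤ 2 * e.card + P := by
    have h1 : 2 * S = ∑ x ∈ e, 2 * m x := by rw [← hSm, Finset.mul_sum]
    have h2 : ∑ x ∈ e, 2 * m x ≤ ∑ x ∈ e, (2 + m x * (m x - 1)) :=
      Finset.sum_le_sum fun x _ => knh_pt2 (m x)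
    have h3 : ∑ x ∈ e, (2 + m x * (m x - 1)) = 2 * e.card + ∑ x ∈ e, m x * (m x - 1) := by
      rw [Finset.sum_add_distrib, Finset.sum_const, smul_eq_mul, mul_comm]
    have h4 : ∑ x ∈ e, m x * (m x - 1) ≤ P := by
      rw [hPdef]
      exact Finset.sum_le_sum_of_subset (Finset.subset_univ e)
    omega
  have hMuniv : ∑ x, m x = r * k := by
    simp only [hm]
    rw [knh_dc1 v Finset.univ]
    have h1 : ∀ i : Fin r, (Finset.univ ∩ v i).card = k := fun i => by
      rw [Finset.univ_inter]; exact hk i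
    rw [Finset.sum_congr rfl fun i _ => h1 i, Finset.sum_const, Finset.card_univ,
      Fintype.card_fin, smul_eq_mul]
  set C := (Finset.univ.filter (fun x : Fin n => 1 ≤ m x)).card with hC
  have hCov : 2 * (r * k) ≤ 2 * C + P := by
    have h1 : 2 * (r * k) = ∑ x, 2 * m x := by rw [← hMuniv, Finset.mul_sum]
    have h2 : ∑ x, 2 * m x ≤ ∑ x, (2 * (if 1 ≤ m x then 1 else 0) + m x * (m x - 1)) :=
      Finset.sum_le_sum fun x _ => knh_pt1 (m x)
    have h3 : ∑ x, (2 * (if 1 ≤ m x then 1 else 0) + m x * (m x - 1)) = 2 * C + P := by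
      rw [Finset.sum_add_distrib, ← Finset.mul_sum, ← Finset.card_filter, hPdef, hC]
    omega
  have hEC : e.card + C ≤ S + n := by
    set U := ∑ x : Fin n, (if 1 ≤ m x then 0 else 1) with hU
    have hCU : C + U = n := by
      rw [hC, hU, Finset.card_filter, ← Finset.sum_add_distrib]
      have h1 : ∀ x : Fin n, (if 1 ≤ m x then 1 else 0) + (if 1 ≤ m x then 0 else 1) = 1 :=
        fun x => by split <;> rfl
      rw [Finset.sum_congr rfl fun x _ => h1 x, Finset.sum_const, Finset.card_univ,
        Fintype.card_fin, smul_eq_mul, mul_one]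
    have h2 : e.card ≤ S + U := by
      have h3 : e.card = ∑ _x ∈ e, 1 := by
        rw [Finset.sum_const, smul_eq_mul, mul_one]
      have h4 : ∑ _x ∈ e, 1 ≤ ∑ x ∈ e, (m x + (if 1 ≤ m x then 0 else 1)) :=
        Finset.sum_le_sum fun x _ => by split <;> omega
      have h5 : ∑ x ∈ e, (m x + (if 1 ≤ m x then 0 else 1))
          = (∑ x ∈ e, m x) + ∑ x ∈ e, (if 1 ≤ m x then 0 else 1) :=
        Finset.sum_add_distrib
      have h6 : ∑ x ∈ e, (if 1 ≤ m x then 0 else 1) ≤ U := by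
        rw [hU]
        exact Finset.sum_le_sum_of_subset (Finset.subset_univ e)
      omega
    omega
  -- cast to ℝ
  have hr1 : (1:ℕ) ≤ r := by omega
  have hrpos : (0:ℝ) < r := by positivity
  have hUBr : (2:ℝ) * S ≤ 2 * e.card + P := by exact_mod_cast hUB
  have hCovr : (2:ℝ) * ((r:ℝ) * k) ≤ 2 * C + P := by exact_mod_cast hCov
  have hECr : (e.card:ℝ) + C ≤ (S:ℝ) + n := by exact_mod_cast hEC
  have hktr : (r:ℝ) * k + (r:ℝ) * t = n := by exact_mod_cast hkt
  have hPler : (P:ℝ) ≤ (r:ℝ) * ((r:ℝ)-1) * ((s:ℝ)-1) := by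
    have h2 : ((P:ℕ):ℝ) ≤ ((r * (r-1) * (s-1) : ℕ) : ℝ) := Nat.cast_le.mpr hPle
    rw [Nat.cast_mul, Nat.cast_mul, Nat.cast_sub hr1, Nat.cast_sub hs, Nat.cast_one] at h2
    exact h2
  have hXsum : ∑ i, X i = (r:ℝ) * ((S:ℝ) - (e.card:ℝ) + (t:ℝ)*(r:ℝ)/2) := by
    have h1 : ∀ i : Fin r, X i
        = ((e ∩ v i).card : ℝ) * (r:ℝ) - (e.card:ℝ) + (t:ℝ)*(r:ℝ)/2 := by
      intro i
      have h3 := Finset.card_inter_add_card_sdiff e (v i)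
      have h4 : ((e ∩ v i).card : ℝ) + ((e \ v i).card : ℝ) = (e.card : ℝ) := by
        exact_mod_cast congrArg (Nat.cast : ℕ → ℝ) h3
      simp only [hX]
      linarith [h4]
    rw [Finset.sum_congr rfl fun i _ => h1 i]
    rw [Finset.sum_add_distrib, Finset.sum_sub_distrib, ← Finset.sum_mul,
      Finset.sum_const, Finset.sum_const, Finset.card_univ, Fintype.card_fin, nsmul_eq_mul,
      nsmul_eq_mul]
    rw [hSdef]
    push_cast
    ring
  cases hb : sgn (v i0) with
  | true =>
    have hXi : ∀ i, D < X i := by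
      intro i
      have h0 : 0 ≤ X i := of_decide_eq_true ((hsgnX i).symm.trans ((hsame i).2.trans hb))
      have h1 := hXabs i
      rwa [abs_of_nonneg h0] at h1
    have hsum : (r:ℝ) * D < ∑ i, X i := by
      calc (r:ℝ) * D = ∑ _i : Fin r, D := by
            rw [Finset.sum_const, Finset.card_univ, Fintype.card_fin, nsmul_eq_mul]
        _ < ∑ i, X i := Finset.sum_lt_sum_of_nonempty ⟨i0, Finset.mem_univ i0⟩
            fun i _ => hXi i
    rw [hXsum] at hsum
    have h5 : D < (S:ℝ) - (e.card:ℝ) + (t:ℝ)*(r:ℝ)/2 :=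
      lt_of_mul_lt_mul_left hsum (le_of_lt hrpos)
    rw [hD] at h5
    linarith [hUBr, hPler, h5]
  | false =>
    have hXi : ∀ i, X i < -D := by
      intro i
      have h0 : ¬ (0 ≤ X i) := of_decide_eq_false ((hsgnX i).symm.trans ((hsame i).2.trans hb))
      have h1 := hXabs i
      rw [abs_of_neg (by linarith [not_le.mp h0])] at h1
      linarith
    have hsum : ∑ i, X i < (r:ℝ) * (-D) := by
      calc ∑ i, X i < ∑ _i : Fin r, (-D) :=
            Finset.sum_lt_sum_of_nonempty ⟨i0, Finset.mem_univ i0⟩ fun i _ => hXi i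
        _ = (r:ℝ) * (-D) := by
            rw [Finset.sum_const, Finset.card_univ, Fintype.card_fin, nsmul_eq_mul]
    rw [hXsum] at hsum
    have h5 : (S:ℝ) - (e.card:ℝ) + (t:ℝ)*(r:ℝ)/2 < -D :=
      lt_of_mul_lt_mul_left hsum (le_of_lt hrpos)
    rw [hD] at h5
    linarith [hECr, hCovr, hktr, hPler, h5]
end

section
/- Let r ≥ 2, s ≥ 1, t ≥ 0 with r dividing n, and let m be an integer with n ≥ m > (r(r−1)(s−1) + rt)² such that there exists a Hadamard matrix of size m. Then the chromatic number of the generalized Kneser hypergraph KH(n, r, n/r − t, s) is at most 2m. -/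
/-!
Encode a set `A` by the vector `r • 1_A - 1 ∈ {r - 1, -1}^m` on the first `m` points. Since
`M Mᵀ = m • 1`, its transform `Mᵀ u` has squared length `m |u|² ≥ m²`, so some coordinate `i`
satisfies `((Mᵀ u) i)² ≥ m`; colour `A` by that `i` and the sign of that coordinate. If `r` sets
with pairwise intersections `< s` shared a colour, the `r` coordinates would have one sign and
absolute value `≥ √m`, so their sum would exceed `r √m`. But the vectors sum to `r (μ - 1)`, where
`μ x` counts the sets containing `x`, and double counting the pairwise intersections gives
`∑ₓ |μ x - 1| ≤ r (r - 1) (s - 1) + r t`, which contradicts `m > (r (r - 1) (s - 1) + r t)²`.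
-/

open Finset Matrix

section MemCount

variable {α ι : Type*} [Fintype ι] [DecidableEq α] (v : ι → Finset α)

def memCount (x : α) : ℕ := #{i | x ∈ v i}

lemma sum_memCount [Fintype α] : ∑ x, memCount v x = ∑ i, #(v i) := by
  simpa [bipartiteAbove, bipartiteBelow, memCount] using
    sum_card_bipartiteAbove_eq_sum_card_bipartiteBelow (fun x i => x ∈ v i) (s := univ) (t := univ)

lemma sum_memCount_mul_pred [Fintype α] [DecidableEq ι] :
    ∑ x, memCount v x * (memCount v x - 1) = ∑ p ∈ univ.offDiag, #(v p.1 ∩ v p.2) := by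
  have hcount := sum_card_bipartiteAbove_eq_sum_card_bipartiteBelow
    (fun x (p : ι × ι) => x ∈ v p.1 ∧ x ∈ v p.2) (s := univ) (t := univ.offDiag)
  have habove : ∀ x, univ.offDiag.bipartiteAbove (fun x (p : ι × ι) => x ∈ v p.1 ∧ x ∈ v p.2) x
      = (univ.filter fun i => x ∈ v i).offDiag := by
    intro x; ext p; simp [bipartiteAbove]; tauto
  have hbelow : ∀ p : ι × ι, univ.bipartiteBelow (fun x (p : ι × ι) => x ∈ v p.1 ∧ x ∈ v p.2) p
      = v p.1 ∩ v p.2 := by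
    intro p; ext x; simp [bipartiteBelow]
  simp only [habove, hbelow, offDiag_card] at hcount
  simpa [memCount, Nat.mul_sub_one] using hcount

lemma abs_sub_one_add_le_one_add_mul_pred (k : ℕ) :
    |(k : ℝ) - 1| + k ≤ 1 + ((k * (k - 1) : ℕ) : ℝ) := by
  rcases k with _ | k
  · simp
  · have : (k : ℝ) ≤ k * k := by exact_mod_cast Nat.le_mul_self k
    push_cast
    rw [add_sub_cancel_right, abs_of_nonneg (by positivity)]
    linarith

lemma sum_abs_memCount_sub_one_add_sum_card_le [Fintype α] [DecidableEq ι] :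
    ∑ x, |(memCount v x : ℝ) - 1| + ((∑ i, #(v i) : ℕ) : ℝ)
      ≤ Fintype.card α + ((∑ p ∈ univ.offDiag, #(v p.1 ∩ v p.2) : ℕ) : ℝ) := by
  rw [← sum_memCount, ← sum_memCount_mul_pred]
  push_cast
  rw [← sum_add_distrib, Fintype.card_eq_sum_ones, Nat.cast_sum, ← sum_add_distrib]
  exact sum_le_sum fun x _ => mod_cast abs_sub_one_add_le_one_add_mul_pred (memCount v x)

end MemCount

lemma sum_abs_memCount_sub_one_le {n r s t : ℕ} (hrn : r ∣ n) (v : Fin r → Finset (Fin n))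
    (hcard : ∀ i, #(v i) = n / r - t) (hint : ∀ i j, i ≠ j → #(v i ∩ v j) < s) :
    ∑ x, |(memCount v x : ℝ) - 1| ≤ ((r * (r - 1) * (s - 1) + r * t : ℕ) : ℝ) := by
  have hpairs : ∑ p ∈ univ.offDiag, #(v p.1 ∩ v p.2) ≤ r * (r - 1) * (s - 1) := by
    calc ∑ p ∈ univ.offDiag, #(v p.1 ∩ v p.2) ≤ ∑ _p ∈ univ.offDiag, (s - 1) :=
          sum_le_sum fun p hp => Nat.le_sub_one_of_lt (hint _ _ (mem_offDiag.1 hp).2.2)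
      _ = r * (r - 1) * (s - 1) := by simp [offDiag_card, Nat.mul_sub_one]
  have hsizes : n ≤ ∑ i, #(v i) + r * t := by
    calc n = r * (n / r) := (Nat.mul_div_cancel' hrn).symm
      _ ≤ r * (n / r - t + t) := Nat.mul_le_mul_left r (by omega)
      _ = ∑ i, #(v i) + r * t := by simp [hcard, mul_add]
  have hdouble := sum_abs_memCount_sub_one_add_sum_card_le v
  rw [Fintype.card_fin] at hdouble
  have hcast : (n : ℝ) + ((∑ p ∈ univ.offDiag, #(v p.1 ∩ v p.2) : ℕ) : ℝ)
      ≤ ((r * (r - 1) * (s - 1) + r * t : ℕ) : ℝ) + ((∑ i, #(v i) : ℕ) : ℝ) := by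
    exact_mod_cast (by omega)
  linarith

section Hadamard

variable {ι R : Type*} [Fintype ι] [DecidableEq ι]

lemma mul_transpose_eq_card_smul_one [CommRing R] {M : Matrix ι ι R}
    (hM : ∀ i j, M i j = 1 ∨ M i j = -1) (horth : ∀ i j, i ≠ j → ∑ k, M i k * M j k = 0) :
    M * Mᵀ = (Fintype.card ι : R) • 1 := by
  ext i j
  rw [mul_apply, Matrix.smul_apply, one_apply]
  split_ifs with hij
  · subst hij
    have hsq : ∀ k, M i k * M i k = 1 := fun k => by rcases hM i k with h | h <;> simp [h]
    simp [hsq]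
  · simpa using horth i j hij

lemma transpose_mulVec_dotProduct_self [CommRing R] {M : Matrix ι ι R} {c : R}
    (hM : M * Mᵀ = c • 1) (u : ι → R) : Mᵀ *ᵥ u ⬝ᵥ Mᵀ *ᵥ u = c * (u ⬝ᵥ u) := by
  rw [dotProduct_mulVec, vecMul_transpose, mulVec_mulVec, hM, smul_mulVec, one_mulVec,
    smul_dotProduct, smul_eq_mul]

lemma exists_card_le_sq_transpose_mulVec [CommRing R] [LinearOrder R] [IsStrictOrderedRing R]
    [Nonempty ι] {M : Matrix ι ι R} (hM : M * Mᵀ = (Fintype.card ι : R) • 1) {u : ι → R}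
    (hu : ∀ j, 1 ≤ u j ^ 2) : ∃ i, (Fintype.card ι : R) ≤ (Mᵀ *ᵥ u) i ^ 2 := by
  have hsum : ∑ _i : ι, (Fintype.card ι : R) ≤ ∑ i, (Mᵀ *ᵥ u) i ^ 2 := by
    calc ∑ _i : ι, (Fintype.card ι : R) = Fintype.card ι * ∑ _j : ι, 1 := by simp
      _ ≤ Fintype.card ι * (u ⬝ᵥ u) :=
          mul_le_mul_of_nonneg_left (sum_le_sum fun j _ => by simpa [sq] using hu j)
            (Nat.cast_nonneg _)
      _ = ∑ i, (Mᵀ *ᵥ u) i ^ 2 := by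
          rw [← transpose_mulVec_dotProduct_self hM]
          simp only [dotProduct, sq]
  obtain ⟨i, -, hi⟩ := exists_le_of_sum_le univ_nonempty hsum
  exact ⟨i, hi⟩

end Hadamard

lemma abs_mulVec_le_sum_abs {κ ι R : Type*} [Fintype ι] [CommRing R] [LinearOrder R]
    [IsStrictOrderedRing R] {A : Matrix κ ι R} (hA : ∀ i j, |A i j| ≤ 1) (w : ι → R) (i : κ) :
    |(A *ᵥ w) i| ≤ ∑ j, |w j| :=
  (abs_sum_le_sum_abs _ _).trans <| sum_le_sum fun j _ => by
    rw [abs_mul]; exact mul_le_of_le_one_left (abs_nonneg _) (hA i j)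

lemma card_mul_lt_abs_sum {ι R : Type*} [Fintype ι] [Nonempty ι] [CommRing R] [LinearOrder R]
    [IsStrictOrderedRing R] {x : ι → R} {c : R} (hc : 0 ≤ c) (hx : ∀ i, c ^ 2 < x i ^ 2)
    (hsign : ∀ i j, 0 < x i ↔ 0 < x j) : Fintype.card ι * c < |∑ i, x i| := by
  have habs : ∑ i, |x i| = |∑ i, x i| := by
    obtain ⟨i₀⟩ := ‹Nonempty ι›
    by_cases hpos : 0 < x i₀
    · have hnonneg : ∀ i, 0 ≤ x i := fun i => ((hsign i i₀).2 hpos).le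
      simp [abs_sum_of_nonneg' hnonneg, abs_of_nonneg, hnonneg]
    · have hnonpos : ∀ i, x i ≤ 0 := fun i => not_lt.1 fun h => hpos ((hsign i i₀).1 h)
      rw [abs_of_nonpos (sum_nonpos fun i _ => hnonpos i), ← sum_neg_distrib]
      exact sum_congr rfl fun i _ => abs_of_nonpos (hnonpos i)
  calc (Fintype.card ι : R) * c = ∑ _i : ι, c := by simp
    _ < ∑ i, |x i| := sum_lt_sum_of_nonempty univ_nonempty fun i _ =>
        abs_of_nonneg hc ▸ sq_lt_sq.1 (hx i)
    _ = |∑ i, x i| := habs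

section BalancedIndicator

variable {α R : Type*} [DecidableEq α] [CommRing R]

def balancedIndicator (c : R) (A : Finset α) (x : α) : R := c * (if x ∈ A then 1 else 0) - 1

lemma one_le_sq_balancedIndicator [LinearOrder R] [IsStrictOrderedRing R] {c : R} (hc : 2 ≤ c)
    (A : Finset α) (x : α) : 1 ≤ balancedIndicator c A x ^ 2 := by
  unfold balancedIndicator
  split_ifs <;> nlinarith

lemma sum_balancedIndicator {ι : Type*} [Fintype ι] (c : R) (v : ι → Finset α) (x : α) :
    ∑ i, balancedIndicator c (v i) x = c * memCount v x - Fintype.card ι := by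
  simp only [balancedIndicator, sum_sub_distrib, ← mul_sum, sum_boole]
  simp [memCount]

end BalancedIndicator

lemma abs_sum_transpose_mulVec_balancedIndicator_le {κ : Type*} [Fintype κ] {n r s t : ℕ}
    (hrn : r ∣ n) (e : κ ↪ Fin n) {M : Matrix κ κ ℝ} (hM : ∀ i j, |M i j| ≤ 1)
    (v : Fin r → Finset (Fin n)) (hcard : ∀ i, #(v i) = n / r - t)
    (hint : ∀ i j, i ≠ j → #(v i ∩ v j) < s) (i : κ) :
    |∑ l, (Mᵀ *ᵥ fun j => balancedIndicator (r : ℝ) (v l) (e j)) i|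
      ≤ r * ((r * (r - 1) * (s - 1) + r * t : ℕ) : ℝ) := by
  have hsum : ∀ j, ∑ l, balancedIndicator (r : ℝ) (v l) (e j) = r * (memCount v (e j) - 1) := by
    intro j
    rw [sum_balancedIndicator, Fintype.card_fin]
    ring
  rw [← Finset.sum_apply i, ← mulVec_sum]
  refine (abs_mulVec_le_sum_abs (fun i j => hM j i) _ i).trans ?_
  simp only [Finset.sum_apply, hsum, abs_mul, Nat.abs_cast, ← mul_sum]
  gcongr
  calc ∑ j, |(memCount v (e j) : ℝ) - 1| = ∑ x ∈ univ.map e, |(memCount v x : ℝ) - 1| :=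
        (sum_map univ e fun x => |(memCount v x : ℝ) - 1|).symm
    _ ≤ ∑ x, |(memCount v x : ℝ) - 1| := sum_le_univ_sum_of_nonneg fun x => abs_nonneg _
    _ ≤ _ := sum_abs_memCount_sub_one_le hrn v hcard hint

theorem kneserHypergraph_chromatic_le_of_hadamard_general (n r s t m : ℕ) (hr : 2 ≤ r)
    (hrn : r ∣ n) (hmn : m ≤ n) (hm : (r * (r - 1) * (s - 1) + r * t) ^ 2 < m)
    (hH : ∃ M : Matrix (Fin m) (Fin m) ℝ, (∀ i j, M i j = 1 ∨ M i j = -1) ∧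
      ∀ i j, i ≠ j → ∑ k, M i k * M j k = 0) :
    ∃ f : Finset (Fin n) → Fin (2 * m),
      ∀ v : Fin r → Finset (Fin n), (∀ i, (v i).card = n / r - t) →
        Function.Injective v → (∀ i j, i ≠ j → ((v i) ∩ (v j)).card < s) →
        ∃ i j, f (v i) ≠ f (v j) := by
  classical
  obtain ⟨M, hM, horth⟩ := hH
  have hMM := mul_transpose_eq_card_smul_one hM horth
  have : NeZero m := ⟨by omega⟩
  set u : Finset (Fin n) → Fin m → ℝ :=
    fun A j => balancedIndicator (r : ℝ) A (Fin.castLEEmb hmn j)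
  choose col hcol using fun A => exists_card_le_sq_transpose_mulVec hMM
    (u := u A) fun j => one_le_sq_balancedIndicator (by exact_mod_cast hr) _ _
  let e : Bool × Fin m ≃ Fin (2 * m) := Fintype.equivFinOfCardEq (by simp)
  refine ⟨fun A => e (decide (0 < (Mᵀ *ᵥ u A) (col A)), col A), ?_⟩
  intro v hcard _ hint
  by_contra! hmono
  have : NeZero r := ⟨by omega⟩
  have hcolor := fun l => Prod.mk.inj (e.injective (hmono l 0))
  set x : Fin r → ℝ := fun l => (Mᵀ *ᵥ u (v l)) (col (v 0))
  set Q := r * (r - 1) * (s - 1) + r * t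
  have hlower : (r : ℝ) * Q < |∑ l, x l| := by
    have hx : ∀ l, (Q : ℝ) ^ 2 < x l ^ 2 := fun l => by
      have := hcol (v l)
      rw [(hcolor l).2, Fintype.card_fin] at this
      exact (by exact_mod_cast hm : (Q : ℝ) ^ 2 < m).trans_le this
    have hsign : ∀ l, 0 < x l ↔ 0 < x 0 := fun l => by
      simpa [(hcolor l).2] using (hcolor l).1
    simpa using card_mul_lt_abs_sum (Nat.cast_nonneg Q) hx
      fun l l' => (hsign l).trans (hsign l').symm
  have hupper : |∑ l, x l| ≤ r * Q := abs_sum_transpose_mulVec_balancedIndicator_le hrn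
    (Fin.castLEEmb hmn) (fun i j => by rcases hM i j with h | h <;> simp [h]) v hcard hint _
  linarith

/-- Let `r ≥ 2`, `s ≥ 1`, `t ≥ 0` with `r ∣ n`, and let `m` be an integer with
`n ≥ m > (r(r−1)(s−1) + rt)²` such that a Hadamard matrix of size `m` exists.  Then the
chromatic number of the generalized Kneser hypergraph `KH(n, r, n/r − t, s)` is at most
`2m`: there is a coloring of all `(n/r − t)`-element subsets of `{1,…,n}` in `2m` colors
with no `r` pairwise distinct subsets having pairwise intersections of size `< s` all of
the same color. -/
theorem kneserHypergraph_chromatic_le_of_hadamard (n r s t m : ℕ) (hr : 2 ≤ r) (hs : 1 ≤ s)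
    (hrn : r ∣ n) (hmn : m ≤ n) (hm : (r * (r - 1) * (s - 1) + r * t) ^ 2 < m)
    (hH : ∃ M : Matrix (Fin m) (Fin m) ℝ, (∀ i j, M i j = 1 ∨ M i j = -1) ∧
      ∀ i j, i ≠ j → ∑ k, M i k * M j k = 0) :
    ∃ f : Finset (Fin n) → Fin (2 * m),
      ∀ v : Fin r → Finset (Fin n), (∀ i, (v i).card = n / r - t) →
        Function.Injective v → (∀ i j, i ≠ j → ((v i) ∩ (v j)).card < s) →
        ∃ i j, f (v i) ≠ f (v j) :=
  kneserHypergraph_chromatic_le_of_hadamard_general n r s t m hr hrn hmn hm hH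
end

section
/- Let n be even, and let l, t, s ≥ 0 and m be integers with n ≥ m > 4(s + 2l + t)² such that there exists a Hadamard matrix of size m. Then the chromatic number of the signed Kneser graph K(n, n/2 − l − t, l, −2l + s) is at most 2m. -/
open Finset

section Aux

lemma sum_pm_card_odd_ne_zero {α : Type*} [Fintype α] (x : α → ℤ)
    (hx : ∀ i, x i = 1 ∨ x i = -1) (s : Finset α) (hodd : s.card % 2 = 1) :
    (∑ i ∈ s, x i) ≠ 0 := by
  intro h0
  have hcast : ((∑ i ∈ s, x i : ℤ) : ZMod 2) = (s.card : ZMod 2) := by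
    push_cast
    have : ∑ i ∈ s, ((x i : ZMod 2)) = ∑ _i ∈ s, (1 : ZMod 2) :=
      Finset.sum_congr rfl (fun i _ => by rcases hx i with h | h <;> rw [h] <;> decide)
    rw [this]; simp
  rw [h0] at hcast
  have h2 : ((s.card % 2 : ℕ) : ZMod 2) = 0 := by rw [ZMod.natCast_mod]; exact hcast.symm
  rw [hodd] at h2
  exact absurd h2 (by decide)

lemma hadamard_even (m : ℕ) (hm : 2 ≤ m) (M : Matrix (Fin m) (Fin m) ℝ)
    (h1 : ∀ i j, M i j = 1 ∨ M i j = -1)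
    (h2 : ∀ i j, i ≠ j → ∑ k, M i k * M j k = 0) : m % 2 = 0 := by
  classical
  have horth := h2 ⟨0, by omega⟩ ⟨1, by omega⟩ (by simp [Fin.ext_iff])
  set P : Fin m → Prop := fun k => M ⟨0, by omega⟩ k * M ⟨1, by omega⟩ k = 1 with hP
  have hsum : ∑ k, M ⟨0, by omega⟩ k * M ⟨1, by omega⟩ k
      = ∑ k : Fin m, (2 * (if P k then (1:ℝ) else 0) - 1) := by
    refine Finset.sum_congr rfl fun k _ => ?_
    rcases h1 ⟨0, by omega⟩ k with ha | ha <;> rcases h1 ⟨1, by omega⟩ k with hb | hb <;>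
      simp [hP, ha, hb] <;> norm_num
  rw [hsum] at horth
  rw [Finset.sum_sub_distrib, ← Finset.mul_sum, Finset.sum_boole, Finset.sum_const] at horth
  simp only [Finset.card_univ, Fintype.card_fin, nsmul_eq_mul, mul_one] at horth
  have : (m : ℝ) = 2 * ((Finset.univ.filter P).card : ℝ) := by linarith
  have hm2 : m = 2 * (Finset.univ.filter P).card := by exact_mod_cast this
  omega

lemma hadamard_col_ortho (m : ℕ) (hm : 0 < m) (M : Matrix (Fin m) (Fin m) ℝ)
    (h1 : ∀ i j, M i j = 1 ∨ M i j = -1)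
    (h2 : ∀ i j, i ≠ j → ∑ k, M i k * M j k = 0) :
    ∀ j j' : Fin m, ∑ i, M i j * M i j' = if j = j' then (m : ℝ) else 0 := by
  classical
  have hm0 : (m : ℝ) ≠ 0 := by positivity
  have hMMt : M * M.transpose = (m : ℝ) • 1 := by
    ext i j
    rw [Matrix.mul_apply]
    simp only [Matrix.transpose_apply, Matrix.smul_apply, Matrix.one_apply, smul_eq_mul]
    by_cases h : i = j
    · subst h
      simp only [if_pos rfl, mul_one]
      have : ∀ k, M i k * M i k = 1 := fun k => by rcases h1 i k with h | h <;> rw [h] <;> norm_num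
      rw [Finset.sum_congr rfl fun k _ => this k]
      simp
    · rw [h2 i j h]; simp [h]
  have h1' : M * ((m : ℝ)⁻¹ • M.transpose) = 1 := by
    rw [Matrix.mul_smul, hMMt, smul_smul, inv_mul_cancel₀ hm0, one_smul]
  have h2' : ((m : ℝ)⁻¹ • M.transpose) * M = 1 := mul_eq_one_comm.mp h1'
  have hMtM : M.transpose * M = (m : ℝ) • 1 := by
    calc M.transpose * M = (m : ℝ) • (((m : ℝ)⁻¹ • M.transpose) * M) := by
          rw [Matrix.smul_mul, smul_smul, mul_inv_cancel₀ hm0, one_smul]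
      _ = (m : ℝ) • 1 := by rw [h2']
  intro j j'
  have := congrFun (congrFun hMtM j) j'
  rw [Matrix.mul_apply] at this
  simp only [Matrix.transpose_apply, Matrix.smul_apply, Matrix.one_apply, smul_eq_mul] at this
  rw [this]
  by_cases h : j = j' <;> simp [h]

lemma hadamard_sum_sq (m : ℕ) (M : Matrix (Fin m) (Fin m) ℝ)
    (hcol : ∀ j j' : Fin m, ∑ i, M i j * M i j' = if j = j' then (m : ℝ) else 0)
    (y : Fin m → ℝ) :
    ∑ i, (∑ j, M i j * y j) ^ 2 = m * ∑ j, y j ^ 2 := by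
  classical
  have expand : ∀ i : Fin m, (∑ j, M i j * y j) ^ 2
      = ∑ j, ∑ j', (M i j * M i j') * (y j * y j') := by
    intro i
    rw [sq, Finset.sum_mul_sum]
    exact Finset.sum_congr rfl fun j _ => Finset.sum_congr rfl fun j' _ => by ring
  rw [Finset.sum_congr rfl fun i _ => expand i]
  rw [Finset.sum_comm]
  have swap2 : ∀ j : Fin m, ∑ i, ∑ j', (M i j * M i j') * (y j * y j')
      = ∑ j', (∑ i, M i j * M i j') * (y j * y j') := by
    intro j
    rw [Finset.sum_comm]
    exact Finset.sum_congr rfl fun j' _ => by rw [Finset.sum_mul]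
  rw [Finset.sum_congr rfl fun j _ => swap2 j]
  rw [Finset.mul_sum]
  refine Finset.sum_congr rfl fun j _ => ?_
  rw [Finset.sum_congr rfl fun j' (_ : j' ∈ Finset.univ) => by rw [hcol j j']]
  rw [show (fun j' => (if j = j' then (m:ℝ) else 0) * (y j * y j'))
      = fun j' => (if j = j' then (m:ℝ) * (y j * y j') else 0) from funext fun j' => by
        by_cases h : j = j' <;> simp [h]]
  rw [Finset.sum_ite_eq Finset.univ j (fun j' => (m : ℝ) * (y j * y j'))]
  simp [sq]

lemma bidx_fiber_odd (n m : ℕ) (hn : n % 2 = 0) (hme : m % 2 = 0) (hm2 : 2 ≤ m) (hmn : m ≤ n)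
    (j : Fin m) :
    (Finset.univ.filter
      (fun i : Fin n => (⟨min i.val (m-1), by omega⟩ : Fin m) = j)).card % 2 = 1 := by
  classical
  have hsing : ∀ j' : Fin m, j'.val < m - 1 →
      (Finset.univ.filter (fun i : Fin n => (⟨min i.val (m-1), by omega⟩ : Fin m) = j'))
        = {(⟨j'.val, by omega⟩ : Fin n)} := by
    intro j' hj'
    ext i
    simp only [Finset.mem_filter, Finset.mem_univ, true_and, Finset.mem_singleton, Fin.ext_iff]
    omega
  by_cases hj : j.val < m - 1
  · rw [hsing j hj]; simp
  · have hlast : j.val = m - 1 := by have := j.isLt; omega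
    have htot := Finset.card_eq_sum_card_fiberwise
      (f := fun i : Fin n => (⟨min i.val (m-1), by omega⟩ : Fin m))
      (s := Finset.univ) (t := Finset.univ) (fun x _ => Finset.mem_univ _)
    rw [← Finset.sum_erase_add _ _ (Finset.mem_univ j)] at htot
    have herase : ∑ j' ∈ Finset.univ.erase j,
        (Finset.univ.filter (fun i : Fin n => (⟨min i.val (m-1), by omega⟩ : Fin m) = j')).card
        = ∑ _j' ∈ Finset.univ.erase j, 1 := by
      refine Finset.sum_congr rfl fun j' hj' => ?_
      have hne : j' ≠ j := (Finset.mem_erase.mp hj').1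
      have hj'lt : j'.val < m - 1 := by
        have := j'.isLt
        rcases Nat.lt_or_ge j'.val (m-1) with h | h
        · exact h
        · exfalso; exact hne (Fin.ext (by omega))
      rw [hsing j' hj'lt]; simp
    rw [herase] at htot
    simp only [Finset.sum_const, smul_eq_mul, mul_one, Finset.card_erase_of_mem (Finset.mem_univ j),
      Finset.card_univ, Fintype.card_fin] at htot
    omega

end Aux


set_option maxHeartbeats 1000000 in
/-- Let `n` be even and let `l, t, s ≥ 0` and `m` be integers with `n ≥ m > 4(s + 2l + t)²`
such that a Hadamard matrix of size `m` exists.  Then the chromatic number of the signed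
Kneser graph `K(n, n/2 − l − t, l, −2l + s)` is at most `2m`: there is a coloring in `2m`
colors of all vectors `v ∈ {0, +1, −1}ⁿ` with exactly `n/2 − l − t` coordinates `+1` and
exactly `l` coordinates `−1` such that no two distinct such vectors with scalar product
`< −2l + s` get the same color. -/
theorem signedKneser_chromatic_le_of_hadamard (n l t s m : ℕ) (hn : Even n)
    (hmn : m ≤ n) (hm : 4 * (s + 2 * l + t) ^ 2 < m)
    (hH : ∃ M : Matrix (Fin m) (Fin m) ℝ, (∀ i j, M i j = 1 ∨ M i j = -1) ∧
      ∀ i j, i ≠ j → ∑ k, M i k * M j k = 0) :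
    ∃ f : (Fin n → ℤ) → Fin (2 * m),
      ∀ v w : Fin n → ℤ,
        (∀ i, v i = 0 ∨ v i = 1 ∨ v i = -1) → (∀ i, w i = 0 ∨ w i = 1 ∨ w i = -1) →
        (Finset.univ.filter (fun i => v i = 1)).card = n / 2 - l - t →
        (Finset.univ.filter (fun i => w i = 1)).card = n / 2 - l - t →
        (Finset.univ.filter (fun i => v i = -1)).card = l →
        (Finset.univ.filter (fun i => w i = -1)).card = l →
        v ≠ w → (∑ i, v i * w i) < (s : ℤ) - 2 * (l : ℤ) →
        f v ≠ f w := by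
  classical
  have hm1 : 0 < m := lt_of_le_of_lt (Nat.zero_le _) hm
  by_cases hst : s + 2 * l + t = 0
  · -- degenerate case: no edges at all
    have hs0 : s = 0 := by omega
    have hl0 : l = 0 := by omega
    refine ⟨fun _ => ⟨0, by omega⟩, ?_⟩
    intro v w hv hw _ _ hmv hmw _ hadj _
    have hvn : ∀ i, v i ≠ -1 := by
      intro i hi
      have h := Finset.card_eq_zero.mp (by rw [hmv, hl0])
      exact absurd (Finset.mem_filter.mpr ⟨Finset.mem_univ i, hi⟩) (by rw [h]; simp)
    have hwn : ∀ i, w i ≠ -1 := by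
      intro i hi
      have h := Finset.card_eq_zero.mp (by rw [hmw, hl0])
      exact absurd (Finset.mem_filter.mpr ⟨Finset.mem_univ i, hi⟩) (by rw [h]; simp)
    have hnn : (0:ℤ) ≤ ∑ i, v i * w i := by
      refine Finset.sum_nonneg fun i _ => ?_
      have hv0 : 0 ≤ v i := by
        rcases hv i with h|h|h
        · rw [h]
        · rw [h]; norm_num
        · exact absurd h (hvn i)
      have hw0 : 0 ≤ w i := by
        rcases hw i with h|h|h
        · rw [h]
        · rw [h]; norm_num
        · exact absurd h (hwn i)
      exact mul_nonneg hv0 hw0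
    rw [hs0, hl0] at hadj
    push_cast at hadj
    linarith
  · -- main case
    obtain ⟨M, hM1, hM2⟩ := hH
    have hx1 : 1 ≤ s + 2*l + t := by omega
    have hsq : s + 2*l + t ≤ (s + 2*l + t)^2 := Nat.le_self_pow two_ne_zero _
    have hm5 : 5 ≤ m := by nlinarith
    have hme : m % 2 = 0 := hadamard_even m (by omega) M hM1 hM2
    have hn2 : n % 2 = 0 := Nat.even_iff.mp hn
    have hplt : 2*(n/2 - l - t) + 2*l + 2*t = n := by omega
    set bidx : Fin n → Fin m := fun i => ⟨min i.val (m-1), by omega⟩ with hbidx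
    set x : (Fin n → ℤ) → Fin n → ℤ := fun v i => if v i = 1 then 1 else -1 with hxdef
    set F : Fin m → Finset (Fin n) := fun j => Finset.univ.filter (fun i => bidx i = j) with hFdef
    set y : (Fin n → ℤ) → Fin m → ℤ := fun v j => ∑ i ∈ F j, x v i with hydef
    set a : (Fin n → ℤ) → Fin m → ℝ := fun v i => ∑ j, M i j * (y v j : ℝ) with hadef
    have hcol := hadamard_col_ortho m (by omega) M hM1 hM2
    have hxpm : ∀ v i, x v i = 1 ∨ x v i = -1 := by
      intro v i
      rw [hxdef]
      by_cases h : v i = 1 <;> simp [h]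
    have hyne : ∀ v j, y v j ≠ 0 := by
      intro v j
      rw [hydef]
      exact sum_pm_card_odd_ne_zero (x v) (hxpm v) (F j)
        (bidx_fiber_odd n m hn2 hme (by omega) hmn j)
    have hysq : ∀ v, (m:ℝ) ≤ ∑ j, ((y v j : ℝ))^2 := by
      intro v
      have hone : ∀ j : Fin m, (1:ℝ) ≤ ((y v j : ℝ))^2 := by
        intro j
        have h1 : (1:ℤ) ≤ |y v j| := Int.one_le_abs (hyne v j)
        have h2 : (1:ℤ) ≤ (y v j)^2 := by nlinarith [sq_abs (y v j), abs_nonneg (y v j)]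
        exact_mod_cast h2
      calc (m:ℝ) = ∑ _j : Fin m, (1:ℝ) := by simp
        _ ≤ _ := Finset.sum_le_sum fun j _ => hone j
    have hex : ∀ v : Fin n → ℤ, ∃ i : Fin m, ∀ i' : Fin m, (a v i')^2 ≤ (a v i)^2 := by
      intro v
      obtain ⟨i, _, hi⟩ := Finset.exists_max_image Finset.univ (fun i => (a v i)^2)
        ⟨⟨0, by omega⟩, Finset.mem_univ _⟩
      exact ⟨i, fun i' => hi i' (Finset.mem_univ _)⟩
    choose g hg using hex
    have hmR : (0:ℝ) < m := by exact_mod_cast hm1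
    have hmax : ∀ v, (m:ℝ) ≤ (a v (g v))^2 := by
      intro v
      have h1 : ∑ i, (a v i)^2 = m * ∑ j, ((y v j:ℝ))^2 := by
        rw [hadef]
        exact hadamard_sum_sq m M hcol _
      have h2 : ∑ i, (a v i)^2 ≤ m * (a v (g v))^2 := by
        calc ∑ i, (a v i)^2 ≤ ∑ _i : Fin m, (a v (g v))^2 :=
              Finset.sum_le_sum fun i _ => hg v i
          _ = m * (a v (g v))^2 := by simp [Finset.sum_const, Finset.card_univ]
      have h3 : (m:ℝ) * m ≤ m * (a v (g v))^2 := by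
        refine le_trans ?_ (le_of_eq_of_le h1.symm h2)
        have := hysq v
        nlinarith
      nlinarith
    clear_value bidx x F y a
    refine ⟨fun v => ⟨2 * (g v).val + (if 0 < a v (g v) then 1 else 0), by
      have := (g v).isLt; split <;> omega⟩, ?_⟩
    intro v w hv hw hpv hpw hmv hmw hvw hadj hfeq
    have hval : 2 * (g v).val + (if 0 < a v (g v) then 1 else 0)
        = 2 * (g w).val + (if 0 < a w (g w) then 1 else 0) := by
      have := congrArg Fin.val hfeq
      simpa using this
    have hgeq : g v = g w := by
      apply Fin.ext
      by_cases h1 : 0 < a v (g v) <;> by_cases h2 : 0 < a w (g w) <;>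
        simp [h1, h2] at hval <;> omega
    have hbeq : (0 < a v (g v)) ↔ (0 < a w (g w)) := by
      by_cases h1 : 0 < a v (g v) <;> by_cases h2 : 0 < a w (g w) <;>
        simp [h1, h2] at hval ⊢ <;> omega
    set i0 := g v with hi0
    clear_value i0
    have hane : ∀ u : Fin n → ℤ, a u (g u) ≠ 0 := by
      intro u h0
      have := hmax u
      rw [h0] at this
      nlinarith
    have hva : a v i0 ≠ 0 := by rw [hi0]; exact hane v
    have hwa : a w i0 ≠ 0 := by rw [hgeq]; exact hane w
    have hbeq2 : (0 < a v i0) ↔ (0 < a w i0) := by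
      have h := hbeq
      rw [← hgeq] at h
      exact h
    have hab : 0 < a v i0 * a w i0 := by
      rcases lt_or_gt_of_ne hva with h | h
      · rcases lt_or_gt_of_ne hwa with h' | h'
        · exact mul_pos_of_neg_of_neg h h'
        · exact absurd (hbeq2.mpr h') (not_lt_of_gt h)
      · rcases lt_or_gt_of_ne hwa with h' | h'
        · exact absurd (hbeq2.mp h) (not_lt_of_gt h')
        · exact mul_pos h h'
    -- combinatorial counting
    set Cpp : ℤ := ∑ i, (if v i = 1 ∧ w i = 1 then (1:ℤ) else 0) with hCpp
    set Cmm : ℤ := ∑ i, (if v i = -1 ∧ w i = -1 then (1:ℤ) else 0) with hCmm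
    set Cpm : ℤ := ∑ i, (if v i = 1 ∧ w i = -1 then (1:ℤ) else 0) with hCpm
    set Cmp : ℤ := ∑ i, (if v i = -1 ∧ w i = 1 then (1:ℤ) else 0) with hCmp
    set CS : ℤ := ∑ i, (if (v i = 1 ↔ w i = 1) then (1:ℤ) else 0) with hCS
    clear_value Cpp Cmm Cpm Cmp CS
    have hsum1 : ∑ i, v i * w i = Cpp + Cmm - Cpm - Cmp := by
      rw [hCpp, hCmm, hCpm, hCmp]
      rw [← Finset.sum_add_distrib, ← Finset.sum_sub_distrib, ← Finset.sum_sub_distrib]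
      refine Finset.sum_congr rfl fun i _ => ?_
      rcases hv i with h1|h1|h1 <;> rcases hw i with h2|h2|h2 <;> norm_num [h1, h2]
    have hlw : Cmm + Cpm ≤ (l:ℤ) := by
      rw [hCmm, hCpm, ← Finset.sum_add_distrib]
      calc ∑ i : Fin n, ((if v i = -1 ∧ w i = -1 then (1:ℤ) else 0)
              + (if v i = 1 ∧ w i = -1 then (1:ℤ) else 0))
          ≤ ∑ i : Fin n, (if w i = -1 then (1:ℤ) else 0) := by
            refine Finset.sum_le_sum fun i _ => ?_
            rcases hv i with h1|h1|h1 <;> by_cases h2 : w i = -1 <;> norm_num [h1, h2]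
        _ = (l:ℤ) := by rw [Finset.sum_boole, hmw]
    have hlv : Cmm + Cmp ≤ (l:ℤ) := by
      rw [hCmm, hCmp, ← Finset.sum_add_distrib]
      calc ∑ i : Fin n, ((if v i = -1 ∧ w i = -1 then (1:ℤ) else 0)
              + (if v i = -1 ∧ w i = 1 then (1:ℤ) else 0))
          ≤ ∑ i : Fin n, (if v i = -1 then (1:ℤ) else 0) := by
            refine Finset.sum_le_sum fun i _ => ?_
            rcases hw i with h1|h1|h1 <;> by_cases h2 : v i = -1 <;> norm_num [h1, h2]
        _ = (l:ℤ) := by rw [Finset.sum_boole, hmv]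
    have hCmm0 : 0 ≤ Cmm := by
      rw [hCmm]; exact Finset.sum_nonneg fun i _ => by split <;> norm_num
    have hCS0 : 0 ≤ CS := by
      rw [hCS]; exact Finset.sum_nonneg fun i _ => by split <;> norm_num
    have hCSeq : CS = (n:ℤ) - 2*((n/2 - l - t : ℕ):ℤ) + 2*Cpp := by
      rw [hCS, hCpp]
      have hpt : ∀ i : Fin n, (if (v i = 1 ↔ w i = 1) then (1:ℤ) else 0)
          = 1 - (if v i = 1 then (1:ℤ) else 0) - (if w i = 1 then (1:ℤ) else 0)
            + 2 * (if v i = 1 ∧ w i = 1 then (1:ℤ) else 0) := by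
        intro i
        by_cases h1 : v i = 1 <;> by_cases h2 : w i = 1 <;> norm_num [h1, h2]
      rw [Finset.sum_congr rfl fun i _ => hpt i]
      rw [Finset.sum_add_distrib, Finset.sum_sub_distrib, Finset.sum_sub_distrib,
        ← Finset.mul_sum]
      rw [Finset.sum_boole, Finset.sum_boole, hpv, hpw]
      rw [Finset.sum_const, Finset.card_univ, Fintype.card_fin]
      ring
    have hplt' : 2*((n/2 - l - t : ℕ):ℤ) + 2*(l:ℤ) + 2*(t:ℤ) = (n:ℤ) := by exact_mod_cast hplt
    have hadj' : Cpp + Cmm - Cpm - Cmp < (s:ℤ) - 2*(l:ℤ) := by rw [← hsum1]; exact hadj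
    have hCpple : Cpp + 1 ≤ (s:ℤ) := Int.lt_iff_add_one_le.mp
      (by linarith only [hadj', hlw, hlv, hCmm0])
    have hCSle : CS ≤ 2*(s:ℤ) + 4*(l:ℤ) + 2*(t:ℤ) := by
      rw [hCSeq]; linarith only [hplt', hCpple]
    -- the abs bound
    have hyadd : ∀ j, y v j + y w j = ∑ i ∈ F j, (x v i + x w i) := by
      intro j
      simp only [hydef]
      rw [← Finset.sum_add_distrib]
    have habs1 : |a v i0 + a w i0| ≤ ∑ j, |((y v j + y w j : ℤ) : ℝ)| := by
      have hsum_ab : a v i0 + a w i0 = ∑ j, M i0 j * ((y v j + y w j : ℤ) : ℝ) := by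
        simp only [hadef]
        rw [← Finset.sum_add_distrib]
        refine Finset.sum_congr rfl fun j _ => ?_
        push_cast
        ring
      rw [hsum_ab]
      refine le_trans (Finset.abs_sum_le_sum_abs _ _) (Finset.sum_le_sum fun j _ => ?_)
      rw [abs_mul]
      rcases hM1 i0 j with h | h <;> rw [h] <;> simp
    have habs2 : (∑ j, |y v j + y w j| : ℤ) ≤ ∑ i : Fin n, |x v i + x w i| := by
      calc ∑ j, |y v j + y w j| ≤ ∑ j, ∑ i ∈ F j, |x v i + x w i| :=
            Finset.sum_le_sum fun j _ => by
              rw [hyadd j]; exact Finset.abs_sum_le_sum_abs _ _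
        _ = ∑ i : Fin n, |x v i + x w i| := by
            simp only [hFdef]
            exact Finset.sum_fiberwise_of_maps_to (fun i _ => Finset.mem_univ (bidx i)) _
    have habs3 : (∑ i : Fin n, |x v i + x w i| : ℤ) = 2 * CS := by
      rw [hCS, Finset.mul_sum]
      refine Finset.sum_congr rfl fun i _ => ?_
      by_cases h1 : v i = 1 <;> by_cases h2 : w i = 1 <;> norm_num [hxdef, h1, h2]
    have habs : |a v i0 + a w i0| ≤ 2 * (CS : ℝ) := by
      refine habs1.trans ?_
      have h4 : (∑ j, |((y v j + y w j : ℤ) : ℝ)|) ≤ ((2 * CS : ℤ) : ℝ) := by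
        exact_mod_cast habs2.trans_eq habs3
      calc (∑ j, |((y v j + y w j : ℤ) : ℝ)|) ≤ ((2 * CS : ℤ) : ℝ) := h4
        _ = 2 * (CS : ℝ) := by push_cast; ring
    -- final contradiction
    have hA : (m:ℝ) ≤ (a v i0)^2 := by have h := hmax v; rw [← hi0] at h; exact h
    have hB : (m:ℝ) ≤ (a w i0)^2 := by have h := hmax w; rw [← hgeq] at h; exact h
    have hsq1 : (m:ℝ)*m ≤ (a v i0 * a w i0)^2 := by nlinarith [hA, hB, hmR]
    have hABm : (m:ℝ) ≤ a v i0 * a w i0 := by nlinarith [hsq1, hab, hmR]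
    have hCSnnR : (0:ℝ) ≤ (CS:ℝ) := by exact_mod_cast hCS0
    have hCSleR : (CS:ℝ) ≤ 2*(s:ℝ) + 4*(l:ℝ) + 2*(t:ℝ) := by exact_mod_cast hCSle
    have hmRbig : 4*((s:ℝ) + 2*(l:ℝ) + (t:ℝ))^2 < (m:ℝ) := by exact_mod_cast hm
    have h1 : (a v i0 + a w i0)^2 ≤ (2*(CS:ℝ))^2 := by
      nlinarith [habs, abs_nonneg (a v i0 + a w i0), sq_abs (a v i0 + a w i0), hCSnnR]
    have h2 : (2*(CS:ℝ))^2 ≤ (4*((s:ℝ) + 2*(l:ℝ) + (t:ℝ)))^2 := by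
      nlinarith [hCSnnR, hCSleR]
    nlinarith [h1, h2, hA, hB, hABm, hmRbig]
end

section
/- For every even n ≥ 6, the F-chromatic number of the generalized Kneser graph K(n, n/2, 2) is at most 6. -/
/-!
Fix three points `a, b, c` and take as the sets `A` the three pairs among them together with their
three complements. Colour each point by whether it lies in a given `n/2`-set `v`: since the triangle
on `{a, b, c}` has discrepancy `2`, some pair is monochromatic. If the pair lies inside `v`, then
`v` belongs to the Frankl set of that pair; if it misses `v`, then `v` lies inside the complement,
which has `n - 2` elements, and `v` belongs to its Frankl set because `|v| = n/2`.
-/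

open Finset

namespace GeneralizedKneser

variable {α : Type*} [DecidableEq α]

/-- The inequality defining the Frankl set `I_A`; the condition `|v| = k` is imposed separately. -/
def InFranklSet (s : ℕ) (A v : Finset α) : Prop :=
  #A + s ≤ 2 * #(v ∩ A)

theorem inFranklSet_of_subset {s : ℕ} {A v : Finset α} (hs : s ≤ #A) (h : A ⊆ v) :
    InFranklSet s A v := by
  rw [InFranklSet, inter_eq_right.mpr h]
  omega

theorem inFranklSet_compl_of_disjoint [Fintype α] {s : ℕ} {A v : Finset α} (hs : s ≤ #A)
    (hv : Fintype.card α ≤ 2 * #v) (h : Disjoint A v) : InFranklSet s Aᶜ v := by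
  have hA : #A ≤ Fintype.card α := card_le_univ A
  rw [InFranklSet, inter_eq_left.mpr h.symm.le_compl_right, card_compl]
  omega

def triangleEdges (a b c : α) : Fin 3 → Finset α :=
  ![{a, b}, {b, c}, {a, c}]

theorem card_triangleEdges {a b c : α} (hab : a ≠ b) (hbc : b ≠ c) (hac : a ≠ c) (j : Fin 3) :
    #(triangleEdges a b c j) = 2 := by
  fin_cases j <;> simp [triangleEdges, *]

/-- The triangle has discrepancy `2`: every 2-colouring of its vertices, here membership in `v`,
has a monochromatic edge. -/
theorem exists_triangleEdges_subset_or_disjoint (a b c : α) (v : Finset α) :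
    ∃ j, triangleEdges a b c j ⊆ v ∨ Disjoint (triangleEdges a b c j) v := by
  simp only [triangleEdges, Fin.exists_fin_succ, Fin.exists_fin_zero, Matrix.cons_val_zero,
    Matrix.cons_val_succ, insert_subset_iff, singleton_subset_iff, disjoint_insert_left,
    disjoint_singleton_left]
  tauto

end GeneralizedKneser

open GeneralizedKneser

/-- For every even `n ≥ 6`, the F-chromatic number of the generalized Kneser graph
`K(n, n/2, 2)` is at most `6`: there are `6` Frankl sets covering all `(n/2)`-element
subsets of `{1,…,n}`. -/
theorem fChromatic_s2_le_six (n : ℕ) (hn : Even n) (h6 : 6 ≤ n) :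
    ∃ A : Fin 6 → Finset (Fin n), (∀ i, 2 ≤ (A i).card) ∧
      ∀ v : Finset (Fin n), v.card = n / 2 →
        ∃ i, (A i).card + 2 ≤ 2 * (v ∩ A i).card := by
  obtain ⟨m, rfl⟩ := hn
  set P := triangleEdges (⟨0, by omega⟩ : Fin (m + m)) ⟨1, by omega⟩ ⟨2, by omega⟩
  have hP : ∀ j, #(P j) = 2 := card_triangleEdges (by simp) (by simp) (by simp)
  refine ⟨Fin.append P (compl ∘ P), fun i => ?_, fun v hv => ?_⟩
  · refine Fin.addCases (m := 3) (n := 3) (fun j => ?_) (fun j => ?_) i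
    · rw [Fin.append_left, hP]
    · rw [Fin.append_right, Function.comp_apply, card_compl, Fintype.card_fin, hP]
      omega
  · obtain ⟨j, hsub | hdisj⟩ := exists_triangleEdges_subset_or_disjoint _ _ _ v
    · refine ⟨Fin.castAdd 3 j, ?_⟩
      rw [Fin.append_left]
      exact inFranklSet_of_subset (hP j).ge hsub
    · refine ⟨Fin.natAdd 3 j, ?_⟩
      rw [Fin.append_right]
      exact inFranklSet_compl_of_disjoint (hP j).ge (by rw [Fintype.card_fin, hv]; omega) hdisj
end

section
/- For every even n ≥ 14, the F-chromatic number of the generalized Kneser graph K(n, n/2, 3) is at most 14. -/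
/-!
Put a Fano plane on seven fixed points. Every 2-colouring of the Fano plane has a monochromatic
line, so for each `v` some line `L` lies inside `v` or misses it. In the first case `v ∩ L = L`,
whence `|L| + 3 ≤ 2|v ∩ L|`; in the second `v ⊆ Lᶜ`, and since `2|v| = n` this gives
`|Lᶜ| + 3 ≤ 2|v ∩ Lᶜ|`. Hence the seven lines and their complements are Frankl sets covering
all vertices.
-/

open Finset

def fanoLine : Fin 7 → Finset (Fin 7) :=
  ![{0, 1, 2}, {0, 3, 4}, {0, 5, 6}, {1, 3, 5}, {1, 4, 6}, {2, 3, 6}, {2, 4, 5}]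

theorem card_fanoLine : ∀ i, #(fanoLine i) = 3 := by decide

set_option maxRecDepth 10000 in
theorem exists_fanoLine_subset_or_disjoint :
    ∀ T : Finset (Fin 7), ∃ i, fanoLine i ⊆ T ∨ Disjoint (fanoLine i) T := by
  decide

theorem exists_map_fanoLine_subset_or_disjoint {α : Type*} (e : Fin 7 ↪ α) (v : Finset α) :
    ∃ i, (fanoLine i).map e ⊆ v ∨ Disjoint ((fanoLine i).map e) v := by
  obtain ⟨i, hi⟩ := exists_fanoLine_subset_or_disjoint (v.preimage e e.injective.injOn)
  refine ⟨i, hi.imp map_subset_iff_subset_preimage.mpr fun h => ?_⟩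
  rw [disjoint_left] at h ⊢
  simp only [mem_map, mem_preimage] at h ⊢
  rintro _ ⟨j, hj, rfl⟩
  exact h hj

section Frankl

variable {α : Type*} [DecidableEq α]

theorem card_add_card_le_two_mul_card_inter_of_subset {L v : Finset α} (h : L ⊆ v) :
    #L + #L ≤ 2 * #(v ∩ L) := by
  rw [inter_eq_right.mpr h]
  omega

theorem card_compl_add_card_le_two_mul_card_inter_compl [Fintype α] {L v : Finset α}
    (hv : 2 * #v = Fintype.card α) (h : Disjoint L v) :
    #Lᶜ + #L ≤ 2 * #(v ∩ Lᶜ) := by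
  rw [inter_eq_left.mpr (subset_compl_iff_disjoint_left.mpr h), card_compl_add_card, hv]

end Frankl

/-- For every even `n ≥ 14`, the F-chromatic number of the generalized Kneser graph
`K(n, n/2, 3)` is at most `14`: there are `14` Frankl sets covering all `(n/2)`-element
subsets of `{1,…,n}`. -/
theorem fChromatic_s3_le_fourteen (n : ℕ) (hn : Even n) (h14 : 14 ≤ n) :
    ∃ A : Fin 14 → Finset (Fin n), (∀ i, 3 ≤ (A i).card) ∧
      ∀ v : Finset (Fin n), v.card = n / 2 →
        ∃ i, (A i).card + 3 ≤ 2 * (v ∩ A i).card := by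
  let e : Fin 7 ↪ Fin n := Fin.castLEEmb (by omega)
  let L (i : Fin 7) : Finset (Fin n) := (fanoLine i).map e
  have hL (i : Fin 7) : #(L i) = 3 := by rw [card_map, card_fanoLine]
  let index : Fin 7 ⊕ Fin 7 ≃ Fin 14 := finSumFinEquiv
  refine ⟨fun i => Sum.elim L (fun i => (L i)ᶜ) (index.symm i), fun i => ?_, fun v hv => ?_⟩
  · rcases h : index.symm i with j | j <;>
      simp only [h, Sum.elim_inl, Sum.elim_inr, card_compl, Fintype.card_fin, hL] <;> omega
  · have hv : 2 * #v = Fintype.card (Fin n) := by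
      rw [Fintype.card_fin, hv, Nat.two_mul_div_two_of_even hn]
    obtain ⟨i, hsub | hdisj⟩ := exists_map_fanoLine_subset_or_disjoint e v
    · refine ⟨index (.inl i), ?_⟩
      simp only [Equiv.symm_apply_apply, Sum.elim_inl, ← hL i]
      exact card_add_card_le_two_mul_card_inter_of_subset hsub
    · refine ⟨index (.inr i), ?_⟩
      simp only [Equiv.symm_apply_apply, Sum.elim_inr, ← hL i]
      exact card_compl_add_card_le_two_mul_card_inter_compl hv hdisj
end
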